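/- arXiv:2106.15291 — 8 statements merged into one kernel-verified Lean document; each statement's English description precedes it below -/
import Mathlib

section
/- Fix r₀ > 0, k ∈ ℤ, and set σ = sign(k) (with σ = 0 when k = 0). Let w_k : [r₀,∞) → ℂ be continuous with ∫_{r₀}^∞ s|w_k(s)| ds < ∞, and let v∞r, v∞φ ∈ ℂ satisfy either (|k| = 1 and v∞φ = i k v∞r) or (v∞r = v∞φ = 0). Define for r ≥ r₀: v_r(r) = σ (i r^{-|k|-1}/2) ∫_{r₀}^r s^{|k|+1} w_k(s) ds + σ (i r^{|k|-1}/2) ∫_r^∞ s^{-|k|+1} w_k(s) ds + v∞r and v_φ(r) = (r^{-|k|-1}/2) ∫_{r₀}^r s^{|k|+1} w_k(s) ds − (r^{|k|-1}/2) ∫_r^∞ s^{-|k|+1} w_k(s) ds + v∞φ. Then for every r > r₀ one has d/dr ( r·v_r(r) ) + i k v_φ(r) = 0 and d/dr ( r·v_φ(r) ) − i k v_r(r) = r·w_k(r). -/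
/-!
With `n = |k|`, put `P r = r^(-n) ∫_{r₀}^r s^(n+1) w` and `Q r = r^n ∫_r^∞ s^(1-n) w`, so that
`r v_r = σ i (P + Q) / 2 + r v∞r` and `r v_φ = (P - Q) / 2 + r v∞φ`. By the fundamental theorem of
calculus `P' = -n P / r + r w` and `Q' = n Q / r - r w`: the `r w` terms cancel in `(r v_r)'` and
add up in `(r v_φ)'`, while `σ n = k` turns the `± n / r` terms into `-i k v_φ` and `i k v_r`.
The far-field constants obey the same relations since `k² = 1` whenever they are nonzero.
-/

open MeasureTheory Set Complex Filter Topology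

section SetIntegral

variable {E : Type*} [NormedAddCommGroup E] [NormedSpace ℝ E] [CompleteSpace E] {g : ℝ → E} {a r : ℝ}

theorem hasDerivAt_setIntegral_Ioc (hg : ContinuousOn g (Ici a)) (hr : a < r) :
    HasDerivAt (fun ρ => ∫ s in Ioc a ρ, g s) (g r) r := by
  have hint : IntervalIntegrable g volume a r :=
    (hg.mono (uIcc_of_le hr.le ▸ Icc_subset_Ici_self)).intervalIntegrable
  have hmeas : StronglyMeasurableAtFilter g (𝓝 r) volume :=
    (hg.mono Ioi_subset_Ici_self).stronglyMeasurableAtFilter isOpen_Ioi r hr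
  refine (intervalIntegral.integral_hasDerivAt_right hint hmeas
    (hg.continuousAt (Ici_mem_nhds hr))).congr_of_eventuallyEq ?_
  filter_upwards [Ioi_mem_nhds hr] with ρ hρ
  exact (intervalIntegral.integral_of_le hρ.le).symm

theorem hasDerivAt_setIntegral_Ioi (hg : IntegrableOn g (Ioi a)) (hgr : ContinuousAt g r)
    (hr : a < r) : HasDerivAt (fun ρ => ∫ s in Ioi ρ, g s) (-g r) r := by
  have hint : IntervalIntegrable g volume a r :=
    (intervalIntegrable_iff_integrableOn_Ioc_of_le hr.le).2 (hg.mono_set Ioc_subset_Ioi_self)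
  have hmeas : StronglyMeasurableAtFilter g (𝓝 r) volume :=
    AEStronglyMeasurable.stronglyMeasurableAtFilter_of_mem hg.aestronglyMeasurable
      (Ioi_mem_nhds hr)
  refine ((intervalIntegral.integral_hasDerivAt_right hint hmeas hgr).const_sub
    (∫ s in Ioi a, g s)).congr_of_eventuallyEq ?_
  filter_upwards [Ioi_mem_nhds hr] with ρ hρ
  rw [← intervalIntegral.integral_interval_add_Ioi hg (hg.mono_set (Ioi_subset_Ioi hρ.le))]
  abel

end SetIntegral

theorem continuousOn_ofReal_zpow_mul {w : ℝ → ℂ} {a : ℝ} (ha : 0 < a)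
    (hw : ContinuousOn w (Ici a)) (m : ℤ) :
    ContinuousOn (fun s : ℝ => (s : ℂ) ^ m * w s) (Ici a) :=
  (continuous_ofReal.continuousOn.zpow₀ m fun _ hs =>
    Or.inl (ofReal_ne_zero.2 (ha.trans_le hs).ne')).mul hw

theorem integrableOn_ofReal_zpow_mul {w : ℝ → ℂ} {a : ℝ} (ha : 0 < a)
    (hw : AEStronglyMeasurable w (volume.restrict (Ioi a)))
    (hint : IntegrableOn (fun s : ℝ => s * ‖w s‖) (Ioi a)) {m : ℤ} (hm : m ≤ 1) :
    IntegrableOn (fun s : ℝ => (s : ℂ) ^ m * w s) (Ioi a) := by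
  have hmeas : AEStronglyMeasurable (fun s : ℝ => (s : ℂ) ^ m * w s) (volume.restrict (Ioi a)) :=
    ((continuous_ofReal.continuousOn.zpow₀ m fun _ hs =>
      Or.inl (ofReal_ne_zero.2 (ha.trans hs).ne')).aestronglyMeasurable
      measurableSet_Ioi).mul hw
  refine Integrable.mono' (hint.const_mul (a ^ (m - 1))) hmeas ?_
  filter_upwards [ae_restrict_mem measurableSet_Ioi] with s hs
  have hs0 : 0 < s := ha.trans hs
  have hpow : s ^ (m - 1) ≤ a ^ (m - 1) := by
    rw [← neg_sub, zpow_neg, zpow_neg]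
    exact inv_anti₀ (zpow_pos ha _) (zpow_le_zpow_left₀ (by omega) ha.le hs.le)
  calc ‖(s : ℂ) ^ m * w s‖ = s ^ (m - 1) * (s * ‖w s‖) := by
        rw [norm_mul, norm_zpow, norm_real, Real.norm_of_nonneg hs0.le, ← mul_assoc,
          zpow_sub_one₀ hs0.ne', inv_mul_cancel_right₀ hs0.ne']
    _ ≤ a ^ (m - 1) * (s * ‖w s‖) := by gcongr

theorem HasDerivAt.ofReal_zpow_mul {f : ℝ → ℂ} {r : ℝ} {c : ℂ} {e : ℤ} (m : ℤ) (hr : r ≠ 0)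
    (hme : m + e = 1) (hf : HasDerivAt f ((r : ℂ) ^ e * c) r) :
    HasDerivAt (fun ρ : ℝ => (ρ : ℂ) ^ m * f ρ) (m / r * (r ^ m * f r) + r * c) r := by
  have hr' : (r : ℂ) ≠ 0 := ofReal_ne_zero.2 hr
  refine (((hasDerivAt_zpow m (r : ℂ) (Or.inl hr')).comp_ofReal).mul hf).congr_deriv ?_
  rw [zpow_sub_one₀ hr', ← mul_assoc _ (_ ^ e), ← zpow_add₀ hr', hme, zpow_one]
  ring

theorem farField_coeffs_eq {k : ℤ} {cr cφ : ℂ}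
    (h : (|k| = 1 ∧ cφ = I * k * cr) ∨ (cr = 0 ∧ cφ = 0)) :
    cr = -(I * k * cφ) ∧ cφ = I * k * cr := by
  rcases h with ⟨hk, rfl⟩ | ⟨rfl, rfl⟩
  · have hk2 : (k : ℂ) ^ 2 = 1 := by exact_mod_cast (by rw [← sq_abs, hk, one_pow] : k ^ 2 = 1)
    exact ⟨by linear_combination (k ^ 2 * cr) * I_sq - cr * hk2, rfl⟩
  · simp

theorem hasDerivAt_mul_of_modes (k : ℤ) {P Q Vr Vφ : ℝ → ℂ} {r : ℝ} {ω cr cφ : ℂ} (hr : r ≠ 0)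
    (hP : HasDerivAt P (-((|k| : ℤ) : ℂ) / r * P r + r * ω) r)
    (hQ : HasDerivAt Q (((|k| : ℤ) : ℂ) / r * Q r - r * ω) r)
    (hVr : ∀ᶠ ρ in 𝓝 r, Vr ρ = k.sign * I * (P ρ + Q ρ) / (2 * ρ) + cr)
    (hVφ : ∀ᶠ ρ in 𝓝 r, Vφ ρ = (P ρ - Q ρ) / (2 * ρ) + cφ)
    (hcr : cr = -(I * k * cφ)) (hcφ : cφ = I * k * cr) :
    HasDerivAt (fun ρ : ℝ => (ρ : ℂ) * Vr ρ) (-(I * k * Vφ r)) r ∧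
      HasDerivAt (fun ρ : ℝ => (ρ : ℂ) * Vφ ρ) (I * k * Vr r + r * ω) r := by
  have hsign : (k.sign : ℂ) * (|k| : ℤ) = k := by exact_mod_cast Int.sign_mul_abs k
  have hsign' : (k : ℂ) * k.sign = (|k| : ℤ) := by
    exact_mod_cast (by rw [Int.mul_sign_self, Int.abs_eq_natAbs] : k * k.sign = |k|)
  have hid : HasDerivAt (fun ρ : ℝ => (ρ : ℂ)) 1 r := (hasDerivAt_id r).ofReal_comp
  have hmul : ∀ {V F : ℝ → ℂ} {a c : ℂ}, (∀ᶠ ρ in 𝓝 r, V ρ = a * F ρ / (2 * ρ) + c) →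
      (fun ρ : ℝ => (ρ : ℂ) * V ρ) =ᶠ[𝓝 r] fun ρ => a / 2 * F ρ + ρ * c := by
    intro V F a c hV
    filter_upwards [hV, eventually_ne_nhds hr] with ρ hVρ hρ
    rw [hVρ]
    field_simp [ofReal_ne_zero.2 hρ]
  constructor
  · refine ((((hP.add hQ).const_mul _).add (hid.mul_const cr)).congr_of_eventuallyEq
      (hmul (F := P + Q) hVr)).congr_deriv ?_
    rw [hVφ.self_of_nhds]
    linear_combination (I * (Q r - P r) / (2 * r)) * hsign + hcr
  · have hVφ' : ∀ᶠ ρ in 𝓝 r, Vφ ρ = 1 * (P - Q) ρ / (2 * ρ) + cφ := by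
      simpa only [one_mul, Pi.sub_apply] using hVφ
    refine ((((hP.sub hQ).const_mul _).add (hid.mul_const cφ)).congr_of_eventuallyEq
      (hmul hVφ')).congr_deriv ?_
    rw [hVr.self_of_nhds]
    linear_combination ((P r + Q r) / (2 * r)) * hsign'
      - (k * k.sign * (P r + Q r) / (2 * r)) * I_sq + hcφ

/-- Biot–Savart law in the exterior of the disc, Fourier-mode form.
For `r₀ > 0`, `k ∈ ℤ`, `σ = sign k`, a continuous vorticity coefficient `w` on `[r₀,∞)`
with `∫ s|w(s)| ds < ∞`, and constants `vIr, vIφ` (nonzero only for `|k| = 1`, where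
`vIφ = i k vIr`), the velocity coefficients `v_r, v_φ` defined by the Biot–Savart
formulas satisfy, for every `r > r₀`,
`d/dr (r v_r(r)) + i k v_φ(r) = 0` and `d/dr (r v_φ(r)) − i k v_r(r) = r w(r)`. -/
theorem stmt0 (r₀ : ℝ) (hr₀ : 0 < r₀) (k : ℤ) (w : ℝ → ℂ)
    (hw_cont : ContinuousOn w (Set.Ici r₀))
    (hw_int : IntegrableOn (fun s : ℝ => s * ‖w s‖) (Set.Ioi r₀))
    (vIr vIφ : ℂ)
    (hvI : (|k| = 1 ∧ vIφ = Complex.I * (k : ℂ) * vIr) ∨ (vIr = 0 ∧ vIφ = 0))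
    (vr vφ : ℝ → ℂ)
    (hvr : ∀ r ≥ r₀, vr r =
      (Int.sign k : ℂ) * (Complex.I * (r : ℂ) ^ (-(|k| : ℤ) - 1) / 2) *
        (∫ s in Set.Ioc r₀ r, (s : ℂ) ^ ((|k| : ℤ) + 1) * w s)
      + (Int.sign k : ℂ) * (Complex.I * (r : ℂ) ^ ((|k| : ℤ) - 1) / 2) *
        (∫ s in Set.Ioi r, (s : ℂ) ^ (-(|k| : ℤ) + 1) * w s)
      + vIr)
    (hvφ : ∀ r ≥ r₀, vφ r =
      ((r : ℂ) ^ (-(|k| : ℤ) - 1) / 2) *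
        (∫ s in Set.Ioc r₀ r, (s : ℂ) ^ ((|k| : ℤ) + 1) * w s)
      - ((r : ℂ) ^ ((|k| : ℤ) - 1) / 2) *
        (∫ s in Set.Ioi r, (s : ℂ) ^ (-(|k| : ℤ) + 1) * w s)
      + vIφ) :
    ∀ r > r₀,
      HasDerivAt (fun ρ : ℝ => (ρ : ℂ) * vr ρ) (-(Complex.I * (k : ℂ) * vφ r)) r ∧
      HasDerivAt (fun ρ : ℝ => (ρ : ℂ) * vφ ρ)
        (Complex.I * (k : ℂ) * vr r + (r : ℂ) * w r) r := by
  intro r hr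
  have hr_ne : r ≠ 0 := (hr₀.trans hr).ne'
  set P : ℝ → ℂ := fun ρ => (ρ : ℂ) ^ (-|k|) * ∫ s in Ioc r₀ ρ, (s : ℂ) ^ (|k| + 1) * w s
  set Q : ℝ → ℂ := fun ρ => (ρ : ℂ) ^ |k| * ∫ s in Ioi ρ, (s : ℂ) ^ (-|k| + 1) * w s
  have hP : HasDerivAt P (-((|k| : ℤ) : ℂ) / r * P r + r * w r) r := by
    have hA := hasDerivAt_setIntegral_Ioc (continuousOn_ofReal_zpow_mul hr₀ hw_cont (|k| + 1)) hr
    simpa only [Int.cast_neg] using hA.ofReal_zpow_mul (-|k|) hr_ne (by ring)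
  have hQ : HasDerivAt Q (((|k| : ℤ) : ℂ) / r * Q r - r * w r) r := by
    have hint := integrableOn_ofReal_zpow_mul hr₀
      ((hw_cont.mono Ioi_subset_Ici_self).aestronglyMeasurable measurableSet_Ioi) hw_int
      (m := -|k| + 1) (by linarith [abs_nonneg k])
    have hcont := (continuousOn_ofReal_zpow_mul hr₀ hw_cont (-|k| + 1)).continuousAt
      (Ici_mem_nhds hr)
    have hB := hasDerivAt_setIntegral_Ioi hint hcont hr
    rw [← mul_neg] at hB
    simpa only [mul_neg, ← sub_eq_add_neg] using hB.ofReal_zpow_mul |k| hr_ne (by ring)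
  have hpow : ∀ ρ > r₀, (ρ : ℂ) ^ (-|k| - 1) = (ρ : ℂ) ^ (-|k|) / ρ ∧
      (ρ : ℂ) ^ (|k| - 1) = (ρ : ℂ) ^ |k| / ρ := fun ρ hρ => by
    have hρ : (ρ : ℂ) ≠ 0 := ofReal_ne_zero.2 (hr₀.trans hρ).ne'
    exact ⟨by rw [zpow_sub_one₀ hρ, div_eq_mul_inv], by rw [zpow_sub_one₀ hρ, div_eq_mul_inv]⟩
  obtain ⟨hcr, hcφ⟩ := farField_coeffs_eq hvI
  refine hasDerivAt_mul_of_modes k hr_ne hP hQ ?_ ?_ hcr hcφ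
  · filter_upwards [Ioi_mem_nhds hr] with ρ hρ
    rw [hvr ρ hρ.le, (hpow ρ hρ).1, (hpow ρ hρ).2]
    ring
  · filter_upwards [Ioi_mem_nhds hr] with ρ hρ
    rw [hvφ ρ hρ.le, (hpow ρ hρ).1, (hpow ρ hρ).2]
    ring
end

section
/- Fix r₀ > 0, k ∈ ℤ, σ = sign(k) (σ = 0 when k = 0), let w_k : [r₀,∞) → ℂ be continuous with C_k := ∫_{r₀}^∞ s|w_k(s)| ds < ∞, let v∞r, v∞φ ∈ ℂ, and define v_r(r) = σ (i r^{-|k|-1}/2) ∫_{r₀}^r s^{|k|+1} w_k(s) ds + σ (i r^{|k|-1}/2) ∫_r^∞ s^{-|k|+1} w_k(s) ds + v∞r and v_φ(r) = (r^{-|k|-1}/2) ∫_{r₀}^r s^{|k|+1} w_k(s) ds − (r^{|k|-1}/2) ∫_r^∞ s^{-|k|+1} w_k(s) ds + v∞φ for r ≥ r₀. Then for every r ≥ r₀: |v_r(r) − v∞r| ≤ C_k/r and |v_φ(r) − v∞φ| ≤ C_k/r; in particular v_r and v_φ are bounded on [r₀,∞). -/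
/-!
On `(r₀, r]` the kernel satisfies `|s ^ (|k| + 1)| ≤ r ^ |k| * s`, and on `(r, ∞)` it satisfies
`|s ^ (-|k| + 1)| ≤ r ^ (-|k|) * s`. The prefactors `r ^ (∓|k| - 1)` cancel these powers of `r`
down to `r⁻¹`, so each of the two Biot–Savart terms has norm at most `C_k / (2 r)`.
-/

open MeasureTheory Set Complex

section WeightedMoments

variable {w : ℝ → ℂ} {a r : ℝ}

theorem norm_setIntegral_le_mul_integral_weight (ha : 0 ≤ a)
    (hw : IntegrableOn (fun s : ℝ => s * ‖w s‖) (Ioi a))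
    {S : Set ℝ} (hS : MeasurableSet S) (hSa : S ⊆ Ioi a) {g : ℝ → ℂ} {M : ℝ} (hM : 0 ≤ M)
    (hg : ∀ s ∈ S, ‖g s‖ ≤ M * (s * ‖w s‖)) :
    ‖∫ s in S, g s‖ ≤ M * ∫ s in Ioi a, s * ‖w s‖ := by
  have hweight : 0 ≤ᵐ[volume.restrict (Ioi a)] fun s : ℝ => s * ‖w s‖ :=
    ae_restrict_of_forall_mem measurableSet_Ioi fun s hs =>
      mul_nonneg (ha.trans (le_of_lt hs)) (norm_nonneg _)
  calc ‖∫ s in S, g s‖ ≤ ∫ s in S, M * (s * ‖w s‖) :=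
        norm_integral_le_of_norm_le ((hw.mono_set hSa).const_mul M)
          (ae_restrict_of_forall_mem hS hg)
    _ = M * ∫ s in S, s * ‖w s‖ := integral_const_mul _ _
    _ ≤ M * ∫ s in Ioi a, s * ‖w s‖ :=
        mul_le_mul_of_nonneg_left (setIntegral_mono_set hw hweight hSa.eventuallyLE) hM

theorem norm_ofReal_zpow_add_one_mul {s : ℝ} (hs : 0 < s) (m : ℤ) (z : ℂ) :
    ‖(s : ℂ) ^ (m + 1) * z‖ = s ^ m * (s * ‖z‖) := by
  rw [norm_mul, norm_zpow, norm_real, Real.norm_of_nonneg hs.le, zpow_add_one₀ hs.ne', mul_assoc]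

variable (ha : 0 < a) (hw : IntegrableOn (fun s : ℝ => s * ‖w s‖) (Ioi a))
include ha hw

theorem norm_setIntegral_Ioc_zpow_mul_le {m : ℤ} (hm : 0 ≤ m) (har : a ≤ r) :
    ‖∫ s in Ioc a r, (s : ℂ) ^ (m + 1) * w s‖ ≤ r ^ m * ∫ s in Ioi a, s * ‖w s‖ := by
  refine norm_setIntegral_le_mul_integral_weight ha.le hw measurableSet_Ioc Ioc_subset_Ioi_self
    (zpow_nonneg (ha.le.trans har) m) fun s hs => ?_
  have hs0 : 0 < s := ha.trans hs.1
  rw [norm_ofReal_zpow_add_one_mul hs0]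
  gcongr
  exact zpow_le_zpow_left₀ hm hs0.le hs.2

theorem norm_setIntegral_Ioi_zpow_mul_le {m : ℤ} (hm : 0 ≤ m) (har : a ≤ r) :
    ‖∫ s in Ioi r, (s : ℂ) ^ (-m + 1) * w s‖ ≤ r ^ (-m) * ∫ s in Ioi a, s * ‖w s‖ := by
  have hr : 0 < r := ha.trans_le har
  refine norm_setIntegral_le_mul_integral_weight ha.le hw measurableSet_Ioi (Ioi_subset_Ioi har)
    (zpow_nonneg hr.le _) fun s hs => ?_
  have hs0 : 0 < s := hr.trans hs
  rw [norm_ofReal_zpow_add_one_mul hs0]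
  gcongr
  rw [zpow_neg, zpow_neg]
  exact inv_anti₀ (zpow_pos hr m) (zpow_le_zpow_left₀ hm hr.le (le_of_lt hs))

end WeightedMoments

theorem norm_ofReal_zpow_neg_sub_one_div_two_mul_le {r C : ℝ} (hr : 0 < r) (m : ℤ) {z : ℂ}
    (hz : ‖z‖ ≤ r ^ m * C) : ‖(r : ℂ) ^ (-m - 1) / 2 * z‖ ≤ C / r / 2 := by
  rw [norm_mul, norm_div, norm_zpow, norm_real, Real.norm_of_nonneg hr.le, RCLike.norm_ofNat]
  calc r ^ (-m - 1) / 2 * ‖z‖ ≤ r ^ (-m - 1) / 2 * (r ^ m * C) := by gcongr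
    _ = C / r / 2 := by
      rw [zpow_sub_one₀ hr.ne', zpow_neg]
      field_simp

theorem norm_intCast_sign_mul_I_le_one (k : ℤ) : ‖(Int.sign k : ℂ) * I‖ ≤ 1 := by
  rcases Int.sign_trichotomy k with h | h | h <;> simp [h]

theorem norm_le_of_norm_sub_le_div {v : ℝ → ℂ} {c : ℂ} {r₀ C : ℝ} (hr₀ : 0 < r₀) (hC : 0 ≤ C)
    (hv : ∀ r ≥ r₀, ‖v r - c‖ ≤ C / r) : ∀ r ≥ r₀, ‖v r‖ ≤ ‖c‖ + C / r₀ := fun r hr =>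
  calc ‖v r‖ ≤ ‖v r - c‖ + ‖c‖ := norm_le_norm_sub_add _ _
    _ ≤ C / r + ‖c‖ := by gcongr; exact hv r hr
    _ ≤ ‖c‖ + C / r₀ := by rw [add_comm]; gcongr
theorem norm_sign_mul_I_add_le (k : ℤ) {x y A B : ℂ} {c : ℝ} (hA : ‖x / 2 * A‖ ≤ c)
    (hB : ‖y / 2 * B‖ ≤ c) :
    ‖(Int.sign k : ℂ) * (I * x / 2) * A + (Int.sign k : ℂ) * (I * y / 2) * B‖ ≤ c + c :=
  calc _ = ‖(Int.sign k : ℂ) * I * (x / 2 * A + y / 2 * B)‖ := by ring_nf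
    _ ≤ 1 * (c + c) := by
      rw [norm_mul]
      gcongr
      · exact norm_intCast_sign_mul_I_le_one k
      · exact (norm_add_le _ _).trans (add_le_add hA hB)
    _ = c + c := one_mul _

theorem stmt1_general (r₀ : ℝ) (hr₀ : 0 < r₀) (k : ℤ) (w : ℝ → ℂ)
    (hw_int : IntegrableOn (fun s : ℝ => s * ‖w s‖) (Set.Ioi r₀))
    (vIr vIφ : ℂ)
    (vr vφ : ℝ → ℂ)
    (hvr : ∀ r ≥ r₀, vr r =
      (Int.sign k : ℂ) * (Complex.I * (r : ℂ) ^ (-(|k| : ℤ) - 1) / 2) *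
        (∫ s in Set.Ioc r₀ r, (s : ℂ) ^ ((|k| : ℤ) + 1) * w s)
      + (Int.sign k : ℂ) * (Complex.I * (r : ℂ) ^ ((|k| : ℤ) - 1) / 2) *
        (∫ s in Set.Ioi r, (s : ℂ) ^ (-(|k| : ℤ) + 1) * w s)
      + vIr)
    (hvφ : ∀ r ≥ r₀, vφ r =
      ((r : ℂ) ^ (-(|k| : ℤ) - 1) / 2) *
        (∫ s in Set.Ioc r₀ r, (s : ℂ) ^ ((|k| : ℤ) + 1) * w s)
      - ((r : ℂ) ^ ((|k| : ℤ) - 1) / 2) *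
        (∫ s in Set.Ioi r, (s : ℂ) ^ (-(|k| : ℤ) + 1) * w s)
      + vIφ) :
    (∀ r ≥ r₀,
      ‖vr r - vIr‖ ≤ (∫ s in Set.Ioi r₀, s * ‖w s‖) / r ∧
      ‖vφ r - vIφ‖ ≤ (∫ s in Set.Ioi r₀, s * ‖w s‖) / r) ∧
    ∃ B : ℝ, ∀ r ≥ r₀, ‖vr r‖ ≤ B ∧ ‖vφ r‖ ≤ B := by
  set C := ∫ s in Set.Ioi r₀, s * ‖w s‖
  have hC : 0 ≤ C := setIntegral_nonneg measurableSet_Ioi fun s hs =>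
    mul_nonneg (hr₀.trans hs).le (norm_nonneg _)
  have hk : (0 : ℤ) ≤ |k| := abs_nonneg k
  have hinner : ∀ r ≥ r₀, ‖(r : ℂ) ^ (-(|k| : ℤ) - 1) / 2 *
      ∫ s in Set.Ioc r₀ r, (s : ℂ) ^ ((|k| : ℤ) + 1) * w s‖ ≤ C / r / 2 := fun r hr =>
    norm_ofReal_zpow_neg_sub_one_div_two_mul_le (hr₀.trans_le hr) _
      (norm_setIntegral_Ioc_zpow_mul_le hr₀ hw_int hk hr)
  have houter : ∀ r ≥ r₀, ‖(r : ℂ) ^ ((|k| : ℤ) - 1) / 2 *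
      ∫ s in Set.Ioi r, (s : ℂ) ^ (-(|k| : ℤ) + 1) * w s‖ ≤ C / r / 2 := fun r hr => by
    simpa using norm_ofReal_zpow_neg_sub_one_div_two_mul_le (hr₀.trans_le hr) (-|k|)
      (norm_setIntegral_Ioi_zpow_mul_le hr₀ hw_int hk hr)
  have hbound : ∀ r ≥ r₀, ‖vr r - vIr‖ ≤ C / r ∧ ‖vφ r - vIφ‖ ≤ C / r := fun r hr => by
    rw [hvr r hr, hvφ r hr, add_sub_cancel_right, add_sub_cancel_right, ← add_halves (C / r)]
    exact ⟨norm_sign_mul_I_add_le k (hinner r hr) (houter r hr),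
      (norm_sub_le _ _).trans (add_le_add (hinner r hr) (houter r hr))⟩
  refine ⟨hbound, ‖vIr‖ + ‖vIφ‖ + C / r₀, fun r hr => ⟨?_, ?_⟩⟩
  · linarith [norm_le_of_norm_sub_le_div hr₀ hC (fun r hr => (hbound r hr).1) r hr,
      norm_nonneg vIφ]
  · linarith [norm_le_of_norm_sub_le_div hr₀ hC (fun r hr => (hbound r hr).2) r hr,
      norm_nonneg vIr]

/-- L∞ bound for the Biot–Savart velocity coefficients.
With `C_k = ∫_{r₀}^∞ s |w_k(s)| ds`, the velocity Fourier coefficients defined by the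
Biot–Savart formulas satisfy `|v_r(r) − vIr| ≤ C_k / r` and `|v_φ(r) − vIφ| ≤ C_k / r`
for every `r ≥ r₀`; in particular `v_r` and `v_φ` are bounded on `[r₀,∞)`. -/
theorem stmt1 (r₀ : ℝ) (hr₀ : 0 < r₀) (k : ℤ) (w : ℝ → ℂ)
    (hw_cont : ContinuousOn w (Set.Ici r₀))
    (hw_int : IntegrableOn (fun s : ℝ => s * ‖w s‖) (Set.Ioi r₀))
    (vIr vIφ : ℂ)
    (vr vφ : ℝ → ℂ)
    (hvr : ∀ r ≥ r₀, vr r =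
      (Int.sign k : ℂ) * (Complex.I * (r : ℂ) ^ (-(|k| : ℤ) - 1) / 2) *
        (∫ s in Set.Ioc r₀ r, (s : ℂ) ^ ((|k| : ℤ) + 1) * w s)
      + (Int.sign k : ℂ) * (Complex.I * (r : ℂ) ^ ((|k| : ℤ) - 1) / 2) *
        (∫ s in Set.Ioi r, (s : ℂ) ^ (-(|k| : ℤ) + 1) * w s)
      + vIr)
    (hvφ : ∀ r ≥ r₀, vφ r =
      ((r : ℂ) ^ (-(|k| : ℤ) - 1) / 2) *
        (∫ s in Set.Ioc r₀ r, (s : ℂ) ^ ((|k| : ℤ) + 1) * w s)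
      - ((r : ℂ) ^ ((|k| : ℤ) - 1) / 2) *
        (∫ s in Set.Ioi r, (s : ℂ) ^ (-(|k| : ℤ) + 1) * w s)
      + vIφ) :
    (∀ r ≥ r₀,
      ‖vr r - vIr‖ ≤ (∫ s in Set.Ioi r₀, s * ‖w s‖) / r ∧
      ‖vφ r - vIφ‖ ≤ (∫ s in Set.Ioi r₀, s * ‖w s‖) / r) ∧
    ∃ B : ℝ, ∀ r ≥ r₀, ‖vr r‖ ≤ B ∧ ‖vφ r‖ ≤ B :=
  stmt1_general r₀ hr₀ k w hw_int vIr vIφ vr vφ hvr hvφ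
end

section
/- Fix r₀ > 0, k ∈ ℤ, σ = sign(k) (σ = 0 when k = 0), let w_k : [r₀,∞) → ℂ be continuous with ∫_{r₀}^∞ s|w_k(s)| ds < ∞, and let v∞r, v∞φ ∈ ℂ satisfy either (|k| = 1 and v∞φ = i k v∞r) or (v∞r = v∞φ = 0). With v_r and v_φ defined by v_r(r) = σ (i r^{-|k|-1}/2) ∫_{r₀}^r s^{|k|+1} w_k(s) ds + σ (i r^{|k|-1}/2) ∫_r^∞ s^{-|k|+1} w_k(s) ds + v∞r and v_φ(r) = (r^{-|k|-1}/2) ∫_{r₀}^r s^{|k|+1} w_k(s) ds − (r^{|k|-1}/2) ∫_r^∞ s^{-|k|+1} w_k(s) ds + v∞φ, one has: v_r(r₀) = 0 and v_φ(r₀) = 0 if and only if r₀^{|k|-1} ∫_{r₀}^∞ s^{-|k|+1} w_k(s) ds = 2 v∞φ. -/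
open MeasureTheory Set Complex

lemma sign_mul_I_mul_add_eq_zero {k : ℤ} {a b : ℂ}
    (h : (|k| = 1 ∧ b = I * k * a) ∨ (a = 0 ∧ b = 0)) :
    (Int.sign k : ℂ) * I * b + a = 0 := by
  rcases h with ⟨hk, rfl⟩ | ⟨rfl, rfl⟩
  · rcases abs_eq zero_le_one |>.mp hk with rfl | rfl <;>
      simp only [Int.sign_one, Int.sign_neg, Int.cast_one, Int.cast_neg] <;>
      linear_combination a * I_sq
  · ring

theorem stmt2_general (r₀ : ℝ) (k : ℤ) (w : ℝ → ℂ)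
    (vIr vIφ : ℂ)
    (hvI : (|k| = 1 ∧ vIφ = Complex.I * (k : ℂ) * vIr) ∨ (vIr = 0 ∧ vIφ = 0))
    (vr vφ : ℝ → ℂ)
    (hvr : ∀ r ≥ r₀, vr r =
      (Int.sign k : ℂ) * (Complex.I * (r : ℂ) ^ (-(|k| : ℤ) - 1) / 2) *
        (∫ s in Set.Ioc r₀ r, (s : ℂ) ^ ((|k| : ℤ) + 1) * w s)
      + (Int.sign k : ℂ) * (Complex.I * (r : ℂ) ^ ((|k| : ℤ) - 1) / 2) *
        (∫ s in Set.Ioi r, (s : ℂ) ^ (-(|k| : ℤ) + 1) * w s)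
      + vIr)
    (hvφ : ∀ r ≥ r₀, vφ r =
      ((r : ℂ) ^ (-(|k| : ℤ) - 1) / 2) *
        (∫ s in Set.Ioc r₀ r, (s : ℂ) ^ ((|k| : ℤ) + 1) * w s)
      - ((r : ℂ) ^ ((|k| : ℤ) - 1) / 2) *
        (∫ s in Set.Ioi r, (s : ℂ) ^ (-(|k| : ℤ) + 1) * w s)
      + vIφ) :
    (vr r₀ = 0 ∧ vφ r₀ = 0) ↔
      (r₀ : ℂ) ^ ((|k| : ℤ) - 1) *
        (∫ s in Set.Ioi r₀, (s : ℂ) ^ (-(|k| : ℤ) + 1) * w s) = 2 * vIφ := by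
  have hvr₀ := hvr r₀ le_rfl
  have hvφ₀ := hvφ r₀ le_rfl
  simp only [Ioc_self, setIntegral_empty, mul_zero, zero_add] at hvr₀ hvφ₀
  have hcompat := sign_mul_I_mul_add_eq_zero hvI
  constructor
  · rintro ⟨-, hφ⟩
    linear_combination 2 * hvφ₀ - 2 * hφ
  · intro hmoment
    constructor
    · linear_combination hvr₀ + (Int.sign k : ℂ) * I / 2 * hmoment + hcompat
    · linear_combination hvφ₀ - hmoment / 2

/-- no-slip condition as a vorticity moment relation.
With the Biot–Savart formulas for `v_r, v_φ` in the exterior of the disc of radius `r₀`,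
one has `v_r(r₀) = 0 ∧ v_φ(r₀) = 0` if and only if
`r₀^{|k|-1} ∫_{r₀}^∞ s^{-|k|+1} w_k(s) ds = 2 vIφ`. -/
theorem stmt2 (r₀ : ℝ) (hr₀ : 0 < r₀) (k : ℤ) (w : ℝ → ℂ)
    (hw_cont : ContinuousOn w (Set.Ici r₀))
    (hw_int : IntegrableOn (fun s : ℝ => s * ‖w s‖) (Set.Ioi r₀))
    (vIr vIφ : ℂ)
    (hvI : (|k| = 1 ∧ vIφ = Complex.I * (k : ℂ) * vIr) ∨ (vIr = 0 ∧ vIφ = 0))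
    (vr vφ : ℝ → ℂ)
    (hvr : ∀ r ≥ r₀, vr r =
      (Int.sign k : ℂ) * (Complex.I * (r : ℂ) ^ (-(|k| : ℤ) - 1) / 2) *
        (∫ s in Set.Ioc r₀ r, (s : ℂ) ^ ((|k| : ℤ) + 1) * w s)
      + (Int.sign k : ℂ) * (Complex.I * (r : ℂ) ^ ((|k| : ℤ) - 1) / 2) *
        (∫ s in Set.Ioi r, (s : ℂ) ^ (-(|k| : ℤ) + 1) * w s)
      + vIr)
    (hvφ : ∀ r ≥ r₀, vφ r =
      ((r : ℂ) ^ (-(|k| : ℤ) - 1) / 2) *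
        (∫ s in Set.Ioc r₀ r, (s : ℂ) ^ ((|k| : ℤ) + 1) * w s)
      - ((r : ℂ) ^ ((|k| : ℤ) - 1) / 2) *
        (∫ s in Set.Ioi r, (s : ℂ) ^ (-(|k| : ℤ) + 1) * w s)
      + vIφ) :
    (vr r₀ = 0 ∧ vφ r₀ = 0) ↔
      (r₀ : ℂ) ^ ((|k| : ℤ) - 1) *
        (∫ s in Set.Ioi r₀, (s : ℂ) ^ (-(|k| : ℤ) + 1) * w s) = 2 * vIφ :=
  stmt2_general r₀ k w vIr vIφ hvI vr vφ hvr hvφ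
end

section
/- Let r₀ > 0, T > 0, C > 0, k ∈ ℤ, and let u : [0,T] × [r₀,∞) → ℂ be continuously differentiable in t and twice continuously differentiable in s, satisfying for all t and s > r₀ the equation ∂ₜ u(t,s) = (1/s) ∂ₛ( s ∂ₛ u(t,s) ) − (k²/s²) u(t,s), together with the Robin boundary condition r₀ ∂ₛ u(t,s)|_{s=r₀} + |k| u(t,r₀) = 0 for all t, and the bounds |u(t,s)| ≤ C(1+s)^{-3}, |∂ₛ u(t,s)| ≤ C(1+s)^{-3}, |∂ₜ u(t,s)| ≤ C(1+s)^{-3}. Then the function t ↦ ∫_{r₀}^∞ s^{-|k|+1} u(t,s) ds is constant on [0,T]. -/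
/-!
Write `n = |k|` and `Δ_k w = (1/s)(s w')' - (k²/s²) w`. The moment flux
`Φ(s) = s^(1-n) w'(s) + n s^(-n) w(s)` satisfies `Φ' = s^(1-n) Δ_k w`, the Robin condition says
exactly `Φ(r₀) = 0`, and the decay of `w` and `w'` gives `Φ(s) → 0` as `s → ∞`; hence
`∫_{r₀}^∞ s^(1-n) Δ_k w ds = 0`. Since `∂ₜu = Δ_k u`, differentiating under the integral sign
(every integrand is dominated by a multiple of `s^(-2)`) shows that the moment has derivative zero
on `(0, T)`, and it is continuous on `[0, T]`, so it is constant there.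
-/

open MeasureTheory Set Filter Topology Complex

noncomputable section

def radialLaplacian (k : ℤ) (w : ℝ → ℂ) (s : ℝ) : ℂ :=
  (1 / (s : ℂ)) * deriv (fun σ : ℝ => (σ : ℂ) * deriv w σ) s - ((k : ℂ) ^ 2 / (s : ℂ) ^ 2) * w s

def momentFlux (n : ℤ) (w w' : ℝ → ℂ) (s : ℝ) : ℂ :=
  (s : ℂ) ^ (-n + 1) * w' s + n * (s : ℂ) ^ (-n) * w s

end

theorem zpow_le_zpow_left_of_nonpos {K : Type*} [Field K] [LinearOrder K] [IsStrictOrderedRing K]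
    {a b : K} {n : ℤ} (ha : 0 < a) (hab : a ≤ b) (hn : n ≤ 0) : b ^ n ≤ a ^ n := by
  simpa only [zpow_neg, inv_inv] using
    inv_anti₀ (zpow_pos ha _) (zpow_le_zpow_left₀ (neg_nonneg.2 hn) ha.le hab)

theorem zpow_mul_one_add_zpow_neg_three_le {r s : ℝ} {j : ℤ} (hr : 0 < r) (hrs : r ≤ s)
    (hj : j ≤ 1) : s ^ j * (1 + s) ^ (-3 : ℤ) ≤ r ^ (j - 1) * s ^ (-2 : ℤ) := by
  have hs : 0 < s := hr.trans_le hrs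
  calc s ^ j * (1 + s) ^ (-3 : ℤ) = s ^ (j - 1) * (s * (1 + s) ^ (-3 : ℤ)) := by
        rw [← mul_assoc, ← zpow_add_one₀ hs.ne', sub_add_cancel]
    _ ≤ r ^ (j - 1) * (s * s ^ (-3 : ℤ)) := by
        gcongr
        · exact zpow_le_zpow_left_of_nonpos hr hrs (by omega)
        · exact zpow_le_zpow_left_of_nonpos hs (by linarith) (by norm_num)
    _ = r ^ (j - 1) * s ^ (-2 : ℤ) := by
        rw [mul_comm s, ← zpow_add_one₀ hs.ne']
        norm_num

theorem norm_ofReal_zpow_mul_le {r s C : ℝ} {j : ℤ} {z : ℂ} (hr : 0 < r) (hrs : r ≤ s)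
    (hj : j ≤ 1) (hz : ‖z‖ ≤ C * (1 + s) ^ (-3 : ℤ)) :
    ‖(s : ℂ) ^ j * z‖ ≤ C * r ^ (j - 1) * s ^ (-2 : ℤ) := by
  have hs : 0 < s := hr.trans_le hrs
  have hC : 0 ≤ C :=
    nonneg_of_mul_nonneg_left ((norm_nonneg z).trans hz) (zpow_pos (by linarith) _)
  rw [norm_mul, norm_zpow, Complex.norm_real, Real.norm_of_nonneg hs.le]
  calc s ^ j * ‖z‖ ≤ s ^ j * (C * (1 + s) ^ (-3 : ℤ)) := by gcongr
    _ = C * (s ^ j * (1 + s) ^ (-3 : ℤ)) := by ring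
    _ ≤ C * (r ^ (j - 1) * s ^ (-2 : ℤ)) :=
        mul_le_mul_of_nonneg_left (zpow_mul_one_add_zpow_neg_three_le hr hrs hj) hC
    _ = C * r ^ (j - 1) * s ^ (-2 : ℤ) := by ring

theorem tendsto_ofReal_zpow_mul_atTop_zero {r C : ℝ} {j : ℤ} {v : ℝ → ℂ} (hr : 0 < r)
    (hj : j ≤ 1) (hv : ∀ s ≥ r, ‖v s‖ ≤ C * (1 + s) ^ (-3 : ℤ)) :
    Tendsto (fun s : ℝ => (s : ℂ) ^ j * v s) atTop (𝓝 0) := by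
  have hlim : Tendsto (fun s : ℝ => C * r ^ (j - 1) * s ^ (-2 : ℤ)) atTop (𝓝 0) := by
    simpa using (tendsto_zpow_atTop_zero (by norm_num : (-2 : ℤ) < 0)).const_mul (C * r ^ (j - 1))
  exact squeeze_zero_norm'
    ((eventually_ge_atTop r).mono fun s hs => norm_ofReal_zpow_mul_le hr hs hj (hv s hs)) hlim

theorem ae_restrict_Ioi_norm_ofReal_zpow_mul_le {ι : Type*} {I : Set ι} {r C : ℝ} {j : ℤ}
    {v : ι → ℝ → ℂ} (hr : 0 < r) (hj : j ≤ 1)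
    (hv : ∀ i ∈ I, ∀ s ≥ r, ‖v i s‖ ≤ C * (1 + s) ^ (-3 : ℤ)) :
    ∀ᵐ (s : ℝ) ∂(volume.restrict (Ioi r)), ∀ i ∈ I,
      ‖(s : ℂ) ^ j * v i s‖ ≤ C * r ^ (j - 1) * s ^ (-2 : ℤ) := by
  filter_upwards [ae_restrict_mem measurableSet_Ioi] with s hs i hi
  exact norm_ofReal_zpow_mul_le hr hs.le hj (hv i hi s hs.le)

theorem continuousOn_ofReal_zpow_Ici {r : ℝ} (hr : 0 < r) (j : ℤ) :
    ContinuousOn (fun s : ℝ => (s : ℂ) ^ j) (Ici r) := fun s hs =>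
  ((continuousAt_zpow₀ _ _ (Or.inl (by exact_mod_cast (hr.trans_le hs).ne'))).comp
    continuous_ofReal.continuousAt).continuousWithinAt

theorem integrableOn_Ioi_zpow_of_lt {n : ℤ} {r : ℝ} (hn : n < -1) (hr : 0 < r) :
    IntegrableOn (fun s : ℝ => s ^ n) (Ioi r) := by
  simpa only [Real.rpow_intCast] using
    integrableOn_Ioi_rpow_of_lt (a := (n : ℝ)) (by exact_mod_cast hn) hr

theorem hasDerivAt_derivWithin_of_mem_nhds {𝕜 F : Type*} [NontriviallyNormedField 𝕜]
    [NormedAddCommGroup F] [NormedSpace 𝕜 F] {f : 𝕜 → F} {t : Set 𝕜} {x : 𝕜}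
    (hf : DifferentiableOn 𝕜 f t) (ht : t ∈ 𝓝 x) : HasDerivAt f (derivWithin f t x) x :=
  (hf x (mem_of_mem_nhds ht)).hasDerivWithinAt.hasDerivAt ht

theorem constant_of_hasDerivAt_zero_of_continuousOn {E : Type*} [NormedAddCommGroup E]
    [NormedSpace ℝ E] {f : ℝ → E} {a b : ℝ} (hcont : ContinuousOn f (Icc a b))
    (hderiv : ∀ x ∈ Ioo a b, HasDerivAt f 0 x) : ∀ x ∈ Icc a b, f x = f a := by
  refine constant_of_has_deriv_right_zero hcont fun x hx => ?_
  rcases hx.1.eq_or_lt with rfl | hax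
  · refine hasDerivWithinAt_Ici_of_tendsto_deriv
      (fun y hy => (hderiv y hy).differentiableAt.differentiableWithinAt)
      ((hcont _ (Ico_subset_Icc_self hx)).mono Ioo_subset_Icc_self) (Ioo_mem_nhdsGT hx.2)
      (tendsto_const_nhds.congr' ?_)
    filter_upwards [Ioo_mem_nhdsGT hx.2] with y hy
    exact (hderiv y hy).deriv.symm
  · exact (hderiv x ⟨hax, hx.2⟩).hasDerivWithinAt

theorem integral_eq_of_hasDerivAt_of_integral_eq_zero {α E : Type*} [MeasurableSpace α]
    [NormedAddCommGroup E] [NormedSpace ℝ E] [CompleteSpace E] {μ : Measure α} {a b : ℝ}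
    {g g' : ℝ → α → E} {bound : α → ℝ} (hbound : Integrable bound μ)
    (hg_meas : ∀ τ ∈ Icc a b, AEStronglyMeasurable (g τ) μ)
    (hg'_meas : ∀ τ ∈ Ioo a b, AEStronglyMeasurable (g' τ) μ)
    (hg_le : ∀ᵐ x ∂μ, ∀ τ ∈ Icc a b, ‖g τ x‖ ≤ bound x)
    (hg'_le : ∀ᵐ x ∂μ, ∀ τ ∈ Ioo a b, ‖g' τ x‖ ≤ bound x)
    (hg_cont : ∀ᵐ x ∂μ, ContinuousOn (fun τ => g τ x) (Icc a b))
    (hg_deriv : ∀ᵐ x ∂μ, ∀ τ ∈ Ioo a b, HasDerivAt (fun τ => g τ x) (g' τ x) τ)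
    (hzero : ∀ τ ∈ Ioo a b, ∫ x, g' τ x ∂μ = 0) :
    ∀ τ ∈ Icc a b, ∫ x, g τ x ∂μ = ∫ x, g a x ∂μ := by
  refine constant_of_hasDerivAt_zero_of_continuousOn
    (continuousOn_of_dominated hg_meas (fun τ hτ => hg_le.mono fun x hx => hx τ hτ) hbound
      hg_cont) fun τ hτ => ?_
  have hτ' : τ ∈ Icc a b := Ioo_subset_Icc_self hτ
  have hnhds : Ioo a b ∈ 𝓝 τ := isOpen_Ioo.mem_nhds hτ
  have hint : Integrable (g τ) μ :=
    hbound.mono' (hg_meas τ hτ') (hg_le.mono fun x hx => hx τ hτ')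
  have hderiv := (hasDerivAt_integral_of_dominated_loc_of_deriv_le hnhds
    (eventually_of_mem hnhds fun σ hσ => hg_meas σ (Ioo_subset_Icc_self hσ))
    hint (hg'_meas τ hτ) hg'_le hbound hg_deriv).2
  rwa [hzero τ hτ] at hderiv

theorem hasDerivAt_momentFlux {k : ℤ} {w w' : ℝ → ℂ} {w'' : ℂ} {s : ℝ} (hs : s ≠ 0)
    (hw : ∀ᶠ σ in 𝓝 s, HasDerivAt w (w' σ) σ) (hw' : HasDerivAt w' w'' s) :
    HasDerivAt (momentFlux |k| w w') ((s : ℂ) ^ (-|k| + 1) * radialLaplacian k w s) s := by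
  have hsC : (s : ℂ) ≠ 0 := by exact_mod_cast hs
  have hradial : deriv (fun σ : ℝ => (σ : ℂ) * deriv w σ) s = w' s + s * w'' := by
    have hprod : HasDerivAt (fun σ : ℝ => (σ : ℂ) * w' σ) (1 * w' s + s * w'') s :=
      (hasDerivAt_id s).ofReal_comp.mul hw'
    refine (one_mul (w' s) ▸ hprod.congr_of_eventuallyEq ?_).deriv
    filter_upwards [hw] with σ hσ
    rw [hσ.deriv]
  have hpow (j : ℤ) : HasDerivAt (fun σ : ℝ => (σ : ℂ) ^ j) (j * (s : ℂ) ^ (j - 1)) s :=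
    (hasDerivAt_zpow j (s : ℂ) (Or.inl hsC)).comp_ofReal
  refine HasDerivAt.congr_deriv (f := momentFlux |k| w w') (((hpow (-|k| + 1)).mul hw').add
    (((hpow (-|k|)).const_mul ((|k| : ℤ) : ℂ)).mul hw.self_of_nhds)) ?_
  have hk : (k : ℂ) ^ 2 = ((|k| : ℤ) : ℂ) ^ 2 := by norm_cast; exact (sq_abs k).symm
  rw [radialLaplacian, hradial, hk, show -|k| + 1 - 1 = -|k| by ring, zpow_add_one₀ hsC,
    zpow_sub_one₀ hsC]
  push_cast
  field_simp
  ring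

theorem aestronglyMeasurable_radialLaplacian {k : ℤ} {w : ℝ → ℂ} {t : Set ℝ}
    (ht : MeasurableSet t) (hw : ContinuousOn w t) :
    AEStronglyMeasurable (radialLaplacian k w) (volume.restrict t) := by
  have hinv : Measurable fun s : ℝ => 1 / (s : ℂ) := by fun_prop
  have hsq : Measurable fun s : ℝ => (k : ℂ) ^ 2 / (s : ℂ) ^ 2 := by fun_prop
  exact (hinv.aestronglyMeasurable.mul (stronglyMeasurable_deriv _).aestronglyMeasurable).sub
    (hsq.aestronglyMeasurable.mul (hw.aestronglyMeasurable ht))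

theorem integral_Ioi_zpow_mul_radialLaplacian_eq_zero {k : ℤ} {r C : ℝ} {w : ℝ → ℂ}
    (hr : 0 < r) (hw : ContDiffOn ℝ 2 w (Ici r))
    (robin : (r : ℂ) * derivWithin w (Ici r) r + ((|k| : ℤ) : ℂ) * w r = 0)
    (hw_le : ∀ s ≥ r, ‖w s‖ ≤ C * (1 + s) ^ (-3 : ℤ))
    (hw'_le : ∀ s ≥ r, ‖derivWithin w (Ici r) s‖ ≤ C * (1 + s) ^ (-3 : ℤ))
    (hint : IntegrableOn (fun s : ℝ => (s : ℂ) ^ (-|k| + 1) * radialLaplacian k w s) (Ioi r)) :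
    ∫ s in Ioi r, (s : ℂ) ^ (-|k| + 1) * radialLaplacian k w s = 0 := by
  set w' := derivWithin w (Ici r)
  have hw' : ContDiffOn ℝ 1 w' (Ici r) := hw.derivWithin (uniqueDiffOn_Ici r) (by norm_num)
  have hr0 : (r : ℂ) ≠ 0 := by exact_mod_cast hr.ne'
  have hcont : ContinuousWithinAt (momentFlux |k| w w') (Ici r) r := by
    have hpow (j : ℤ) := continuousOn_ofReal_zpow_Ici hr j r self_mem_Ici
    exact ((hpow _).mul (hw'.continuousOn r self_mem_Ici)).add
      ((continuousWithinAt_const.mul (hpow _)).mul (hw.continuousOn r self_mem_Ici))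
  have hderiv (s : ℝ) (hs : s ∈ Ioi r) :
      HasDerivAt (momentFlux |k| w w') ((s : ℂ) ^ (-|k| + 1) * radialLaplacian k w s) s := by
    refine hasDerivAt_momentFlux (hr.trans hs).ne' ?_
      (hasDerivAt_derivWithin_of_mem_nhds (hw'.differentiableOn one_ne_zero) (Ici_mem_nhds hs))
    filter_upwards [Ioi_mem_nhds hs] with σ hσ
    exact hasDerivAt_derivWithin_of_mem_nhds (hw.differentiableOn (by norm_num)) (Ici_mem_nhds hσ)
  have hlim : Tendsto (momentFlux |k| w w') atTop (𝓝 0) := by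
    have hk := abs_nonneg k
    have h1 := tendsto_ofReal_zpow_mul_atTop_zero hr (j := -|k| + 1) (by linarith) hw'_le
    have h2 := (tendsto_ofReal_zpow_mul_atTop_zero hr (j := -|k|) (by linarith) hw_le).const_mul
      ((|k| : ℤ) : ℂ)
    have h := h1.add h2
    rw [mul_zero, add_zero] at h
    exact h.congr fun s => by rw [momentFlux, mul_assoc]
  have hboundary : momentFlux |k| w w' r = 0 := by
    calc momentFlux |k| w w' r = (r : ℂ) ^ (-|k|) * (r * w' r + ((|k| : ℤ) : ℂ) * w r) := by
          rw [momentFlux, zpow_add_one₀ hr0]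
          ring
      _ = 0 := by rw [robin, mul_zero]
  rw [integral_Ioi_of_hasDerivAt_of_tendsto hcont hderiv hint hlim, hboundary, sub_zero]

theorem stmt4_general (r₀ T C : ℝ) (hr₀ : 0 < r₀) (k : ℤ)
    (u : ℝ → ℝ → ℂ)
    (hs_smooth : ∀ t ∈ Set.Icc (0 : ℝ) T, ContDiffOn ℝ 2 (u t) (Set.Ici r₀))
    (ht_smooth : ∀ s ≥ r₀, ContDiffOn ℝ 1 (fun t => u t s) (Set.Icc 0 T))
    (pde : ∀ t ∈ Set.Icc (0 : ℝ) T, ∀ s > r₀,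
      derivWithin (fun τ => u τ s) (Set.Icc 0 T) t =
        (1 / (s : ℂ)) * deriv (fun σ : ℝ => (σ : ℂ) * deriv (u t) σ) s
          - ((k : ℂ) ^ 2 / (s : ℂ) ^ 2) * u t s)
    (robin : ∀ t ∈ Set.Icc (0 : ℝ) T,
      (r₀ : ℂ) * derivWithin (u t) (Set.Ici r₀) r₀ +
        ((|k| : ℤ) : ℂ) * u t r₀ = 0)
    (hu_bound : ∀ t ∈ Set.Icc (0 : ℝ) T, ∀ s ≥ r₀,
      ‖u t s‖ ≤ C * (1 + s) ^ (-3 : ℤ))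
    (hds_bound : ∀ t ∈ Set.Icc (0 : ℝ) T, ∀ s ≥ r₀,
      ‖derivWithin (u t) (Set.Ici r₀) s‖ ≤ C * (1 + s) ^ (-3 : ℤ))
    (hdt_bound : ∀ t ∈ Set.Icc (0 : ℝ) T, ∀ s ≥ r₀,
      ‖derivWithin (fun τ => u τ s) (Set.Icc 0 T) t‖ ≤ C * (1 + s) ^ (-3 : ℤ)) :
    ∀ t ∈ Set.Icc (0 : ℝ) T,
      (∫ s in Set.Ioi r₀, (s : ℂ) ^ (-(|k| : ℤ) + 1) * u t s) =
      (∫ s in Set.Ioi r₀, (s : ℂ) ^ (-(|k| : ℤ) + 1) * u 0 s) := by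
  set μ := volume.restrict (Ioi r₀)
  have hweight := (continuousOn_ofReal_zpow_Ici hr₀ (-|k| + 1)).mono Ioi_subset_Ici_self
  have hpde (τ : ℝ) (hτ : τ ∈ Icc 0 T) :
      (fun s : ℝ => (s : ℂ) ^ (-|k| + 1) * derivWithin (fun τ => u τ s) (Icc 0 T) τ)
        =ᵐ[μ] fun s : ℝ => (s : ℂ) ^ (-|k| + 1) * radialLaplacian k (u τ) s := by
    filter_upwards [ae_restrict_mem measurableSet_Ioi] with s hs
    rw [pde τ hτ s hs, radialLaplacian]
  have hmeas (τ : ℝ) (hτ : τ ∈ Icc 0 T) :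
      AEStronglyMeasurable (fun s : ℝ => (s : ℂ) ^ (-|k| + 1) * u τ s) μ :=
    (hweight.mul ((hs_smooth τ hτ).continuousOn.mono Ioi_subset_Ici_self)).aestronglyMeasurable
      measurableSet_Ioi
  have hmeas' (τ : ℝ) (hτ : τ ∈ Icc 0 T) : AEStronglyMeasurable
      (fun s : ℝ => (s : ℂ) ^ (-|k| + 1) * derivWithin (fun τ => u τ s) (Icc 0 T) τ) μ :=
    ((hweight.aestronglyMeasurable measurableSet_Ioi).mul (aestronglyMeasurable_radialLaplacian
      measurableSet_Ioi ((hs_smooth τ hτ).continuousOn.mono Ioi_subset_Ici_self))).congr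
      (hpde τ hτ).symm
  have hbound : Integrable (fun s : ℝ => C * r₀ ^ (-|k| + 1 - 1) * s ^ (-2 : ℤ)) μ :=
    (integrableOn_Ioi_zpow_of_lt (by norm_num) hr₀).const_mul _
  have hk : -|k| + 1 ≤ 1 := by linarith [abs_nonneg k]
  have hdt_le := ae_restrict_Ioi_norm_ofReal_zpow_mul_le hr₀ hk hdt_bound
  refine integral_eq_of_hasDerivAt_of_integral_eq_zero hbound hmeas
    (fun τ hτ => hmeas' τ (Ioo_subset_Icc_self hτ))
    (ae_restrict_Ioi_norm_ofReal_zpow_mul_le hr₀ hk hu_bound)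
    (hdt_le.mono fun s hs τ hτ => hs τ (Ioo_subset_Icc_self hτ)) ?_ ?_ fun τ hτ => ?_
  · filter_upwards [ae_restrict_mem measurableSet_Ioi] with s hs
    exact continuousOn_const.mul (ht_smooth s hs.le).continuousOn
  · filter_upwards [ae_restrict_mem measurableSet_Ioi] with s hs τ hτ
    exact (hasDerivAt_derivWithin_of_mem_nhds ((ht_smooth s hs.le).differentiableOn one_ne_zero)
      (Icc_mem_nhds hτ.1 hτ.2)).const_mul _
  · have hτ' := Ioo_subset_Icc_self hτ
    rw [integral_congr_ae (hpde τ hτ')]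
    refine integral_Ioi_zpow_mul_radialLaplacian_eq_zero hr₀ (hs_smooth τ hτ') (robin τ hτ')
      (hu_bound τ hτ') (hds_bound τ hτ') ?_
    exact (hbound.mono' (hmeas' τ hτ') (hdt_le.mono fun s hs => hs τ hτ')).congr (hpde τ hτ')

/-- per-Fourier-mode invariance of the vorticity moment under the
Stokes flow. If `u(t,s)` solves `∂ₜu = (1/s)(s ∂ₛu)' − (k²/s²)u` for `s > r₀`, with the
Robin boundary condition `r₀ ∂ₛu(t,r₀) + |k| u(t,r₀) = 0` and the stated decay bounds,
then `t ↦ ∫_{r₀}^∞ s^{-|k|+1} u(t,s) ds` is constant on `[0,T]`. -/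
theorem stmt4 (r₀ T C : ℝ) (hr₀ : 0 < r₀) (hT : 0 < T) (hC : 0 < C) (k : ℤ)
    (u : ℝ → ℝ → ℂ)
    (hs_smooth : ∀ t ∈ Set.Icc (0 : ℝ) T, ContDiffOn ℝ 2 (u t) (Set.Ici r₀))
    (ht_smooth : ∀ s ≥ r₀, ContDiffOn ℝ 1 (fun t => u t s) (Set.Icc 0 T))
    (pde : ∀ t ∈ Set.Icc (0 : ℝ) T, ∀ s > r₀,
      derivWithin (fun τ => u τ s) (Set.Icc 0 T) t =
        (1 / (s : ℂ)) * deriv (fun σ : ℝ => (σ : ℂ) * deriv (u t) σ) s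
          - ((k : ℂ) ^ 2 / (s : ℂ) ^ 2) * u t s)
    (robin : ∀ t ∈ Set.Icc (0 : ℝ) T,
      (r₀ : ℂ) * derivWithin (u t) (Set.Ici r₀) r₀ +
        ((|k| : ℤ) : ℂ) * u t r₀ = 0)
    (hu_bound : ∀ t ∈ Set.Icc (0 : ℝ) T, ∀ s ≥ r₀,
      ‖u t s‖ ≤ C * (1 + s) ^ (-3 : ℤ))
    (hds_bound : ∀ t ∈ Set.Icc (0 : ℝ) T, ∀ s ≥ r₀,
      ‖derivWithin (u t) (Set.Ici r₀) s‖ ≤ C * (1 + s) ^ (-3 : ℤ))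
    (hdt_bound : ∀ t ∈ Set.Icc (0 : ℝ) T, ∀ s ≥ r₀,
      ‖derivWithin (fun τ => u τ s) (Set.Icc 0 T) t‖ ≤ C * (1 + s) ^ (-3 : ℤ)) :
    ∀ t ∈ Set.Icc (0 : ℝ) T,
      (∫ s in Set.Ioi r₀, (s : ℂ) ^ (-(|k| : ℤ) + 1) * u t s) =
      (∫ s in Set.Ioi r₀, (s : ℂ) ^ (-(|k| : ℤ) + 1) * u 0 s) :=
  stmt4_general r₀ T C hr₀ k u hs_smooth ht_smooth pde robin hu_bound hds_bound hdt_bound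
end

section
/- Fix r₀ > 0, k ∈ ℤ, σ = sign(k) (σ = 0 when k = 0). Let q_k, r_k : [r₀,∞) → ℂ be continuous with ∫_{r₀}^∞ s(|q_k(s)| + |r_k(s)|) ds < ∞, and let v∞r, v∞φ ∈ ℂ satisfy either (|k| = 1 and v∞φ = i k v∞r) or (v∞r = v∞φ = 0). With v_r and v_φ defined by v_r(r) = σ (i r^{-|k|-1}/2) ∫_{r₀}^r s^{|k|+1}( q_k(s) − iσ r_k(s) ) ds + σ (i r^{|k|-1}/2) ∫_r^∞ s^{-|k|+1}( q_k(s) + iσ r_k(s) ) ds + v∞r and v_φ(r) = (r^{-|k|-1}/2) ∫_{r₀}^r s^{|k|+1}( q_k(s) − iσ r_k(s) ) ds − (r^{|k|-1}/2) ∫_r^∞ s^{-|k|+1}( q_k(s) + iσ r_k(s) ) ds + v∞φ, one has: v_r(r₀) = 0 and v_φ(r₀) = 0 if and only if r₀^{|k|-1} ∫_{r₀}^∞ s^{-|k|+1} ( q_k(s) + iσ r_k(s) ) ds = 2 v∞φ. -/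
open MeasureTheory Set Complex

/-!
At `r = r₀` the integrals over `(r₀, r]` vanish, so `v_φ(r₀) = -(A/2) J + v∞φ`, where
`A J = r₀^{|k|-1} ∫_{r₀}^∞ …` is the moment: `v_φ(r₀) = 0` is exactly the moment relation.
Given that relation, `v_r(r₀) = iσ v∞φ + v∞r`, which vanishes for every admissible flow at
infinity because `σ k = |k|`.
-/

theorem sign_mul_I_mul_add_eq_zero_of_flowAtInfinity {k : ℤ} {vIr vIφ : ℂ}
    (hvI : (|k| = 1 ∧ vIφ = I * k * vIr) ∨ (vIr = 0 ∧ vIφ = 0)) :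
    (Int.sign k : ℂ) * I * vIφ + vIr = 0 := by
  rcases hvI with ⟨hk, hφ⟩ | ⟨hr, hφ⟩
  · have hσk : (Int.sign k : ℂ) * k = 1 := by
      exact_mod_cast (Int.sign_mul_self_eq_abs k).trans hk
    rw [hφ]
    linear_combination -vIr * hσk + (Int.sign k : ℂ) * k * vIr * I_sq
  · simp [hr, hφ]

theorem noSlip_iff_moment {σ A J vIr vIφ : ℂ} (hvI : σ * I * vIφ + vIr = 0) :
    (σ * (I * A / 2) * J + vIr = 0 ∧ -(A / 2 * J) + vIφ = 0) ↔ A * J = 2 * vIφ := by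
  constructor
  · rintro ⟨-, hφ⟩
    linear_combination -2 * hφ
  · intro h
    exact ⟨by linear_combination σ * I / 2 * h + hvI, by linear_combination -h / 2⟩

theorem stmt9_general (r₀ : ℝ) (k : ℤ) (q rr : ℝ → ℂ)
    (vIr vIφ : ℂ)
    (hvI : (|k| = 1 ∧ vIφ = Complex.I * (k : ℂ) * vIr) ∨ (vIr = 0 ∧ vIφ = 0))
    (vr vφ : ℝ → ℂ)
    (hvr : ∀ r ≥ r₀, vr r =
      (Int.sign k : ℂ) * (Complex.I * (r : ℂ) ^ (-(|k| : ℤ) - 1) / 2) *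
        (∫ s in Set.Ioc r₀ r, (s : ℂ) ^ ((|k| : ℤ) + 1) *
          (q s - Complex.I * (Int.sign k : ℂ) * rr s))
      + (Int.sign k : ℂ) * (Complex.I * (r : ℂ) ^ ((|k| : ℤ) - 1) / 2) *
        (∫ s in Set.Ioi r, (s : ℂ) ^ (-(|k| : ℤ) + 1) *
          (q s + Complex.I * (Int.sign k : ℂ) * rr s))
      + vIr)
    (hvφ : ∀ r ≥ r₀, vφ r =
      ((r : ℂ) ^ (-(|k| : ℤ) - 1) / 2) *
        (∫ s in Set.Ioc r₀ r, (s : ℂ) ^ ((|k| : ℤ) + 1) *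
          (q s - Complex.I * (Int.sign k : ℂ) * rr s))
      - ((r : ℂ) ^ ((|k| : ℤ) - 1) / 2) *
        (∫ s in Set.Ioi r, (s : ℂ) ^ (-(|k| : ℤ) + 1) *
          (q s + Complex.I * (Int.sign k : ℂ) * rr s))
      + vIφ) :
    (vr r₀ = 0 ∧ vφ r₀ = 0) ↔
      (r₀ : ℂ) ^ ((|k| : ℤ) - 1) *
        (∫ s in Set.Ioi r₀, (s : ℂ) ^ (-(|k| : ℤ) + 1) *
          (q s + Complex.I * (Int.sign k : ℂ) * rr s)) = 2 * vIφ := by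
  rw [hvr r₀ le_rfl, hvφ r₀ le_rfl, Ioc_self, setIntegral_empty, mul_zero, mul_zero,
    zero_add, zero_sub]
  exact noSlip_iff_moment (sign_mul_I_mul_add_eq_zero_of_flowAtInfinity hvI)

/-- no-slip condition as a moment relation, general exterior domain
transported to the exterior of the disc of radius `r₀`. With the Biot–Savart formulas
for `v_r, v_φ` built from the source coefficients `q` and `rr`, one has
`v_r(r₀) = 0 ∧ v_φ(r₀) = 0` if and only if
`r₀^{|k|-1} ∫_{r₀}^∞ s^{-|k|+1} (q(s) + iσ rr(s)) ds = 2 vIφ`. -/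
theorem stmt9 (r₀ : ℝ) (hr₀ : 0 < r₀) (k : ℤ) (q rr : ℝ → ℂ)
    (hq_cont : ContinuousOn q (Set.Ici r₀)) (hr_cont : ContinuousOn rr (Set.Ici r₀))
    (h_int : IntegrableOn (fun s : ℝ => s * (‖q s‖ + ‖rr s‖)) (Set.Ioi r₀))
    (vIr vIφ : ℂ)
    (hvI : (|k| = 1 ∧ vIφ = Complex.I * (k : ℂ) * vIr) ∨ (vIr = 0 ∧ vIφ = 0))
    (vr vφ : ℝ → ℂ)
    (hvr : ∀ r ≥ r₀, vr r =
      (Int.sign k : ℂ) * (Complex.I * (r : ℂ) ^ (-(|k| : ℤ) - 1) / 2) *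
        (∫ s in Set.Ioc r₀ r, (s : ℂ) ^ ((|k| : ℤ) + 1) *
          (q s - Complex.I * (Int.sign k : ℂ) * rr s))
      + (Int.sign k : ℂ) * (Complex.I * (r : ℂ) ^ ((|k| : ℤ) - 1) / 2) *
        (∫ s in Set.Ioi r, (s : ℂ) ^ (-(|k| : ℤ) + 1) *
          (q s + Complex.I * (Int.sign k : ℂ) * rr s))
      + vIr)
    (hvφ : ∀ r ≥ r₀, vφ r =
      ((r : ℂ) ^ (-(|k| : ℤ) - 1) / 2) *
        (∫ s in Set.Ioc r₀ r, (s : ℂ) ^ ((|k| : ℤ) + 1) *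
          (q s - Complex.I * (Int.sign k : ℂ) * rr s))
      - ((r : ℂ) ^ ((|k| : ℤ) - 1) / 2) *
        (∫ s in Set.Ioi r, (s : ℂ) ^ (-(|k| : ℤ) + 1) *
          (q s + Complex.I * (Int.sign k : ℂ) * rr s))
      + vIφ) :
    (vr r₀ = 0 ∧ vφ r₀ = 0) ↔
      (r₀ : ℂ) ^ ((|k| : ℤ) - 1) *
        (∫ s in Set.Ioi r₀, (s : ℂ) ^ (-(|k| : ℤ) + 1) *
          (q s + Complex.I * (Int.sign k : ℂ) * rr s)) = 2 * vIφ :=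
  stmt9_general r₀ k q rr vIr vIφ hvI vr vφ hvr hvφ
end

section
/- Let r₀ > 0, T > 0, k ∈ ℕ. Let (c_n)_{n≥0} be complex numbers with Σ_{n≥0} |c_n| r₀^{-n} < ∞, and define h(z) = Σ_{n≥0} c_n z^{-n} for |z| ≥ r₀ (the series converges absolutely there). Let w : [0,T] × {x ∈ ℝ² : |x| > r₀} → ℂ be measurable with |w(t,x)| ≤ W(x) for some integrable W on {|x| > r₀}. Suppose that for every integer n ≥ 0 the function t ↦ ∫_{|x|>r₀} conj(h(x₁+ix₂)) (x₁+ix₂)^{-(n+k)} w(t,x) dx is constant on [0,T]. Then the function t ↦ ∫_{|x|>r₀} |h(x₁+ix₂)|² (x₁+ix₂)^{-k} w(t,x) dx is also constant on [0,T]. -/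
open MeasureTheory Set Complex

/-- The Euclidean norm of a point of `ℝ × ℝ`. -/
noncomputable def enorm2 (x : ℝ × ℝ) : ℝ := Real.sqrt (x.1 ^ 2 + x.2 ^ 2)

/-!
On `{|z| ≥ r₀}` the series `h = Σ cₙ z⁻ⁿ` is dominated termwise by `Σ |cₙ| r₀⁻ⁿ`, so `|h| ≤ M`
there, and `|h|² z⁻ᵏ w = h · (conj h · z⁻ᵏ w)` expands as `Σ cₙ conj h · z⁻ⁿ⁻ᵏ w` with the summable
majorant `Σ |cₙ| r₀⁻ⁿ · M r₀⁻ᵏ W`. Dominated convergence lets us integrate term by term, which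
writes `∫ |h|² z⁻ᵏ w(t)` as `Σ cₙ` times the moments of order `n + k`; these do not depend on `t`.
-/

open ComplexConjugate

section LaurentTail

variable {𝕜 : Type*} [NormedDivisionRing 𝕜] {r : ℝ} {z : 𝕜}

theorem norm_zpow_neg_natCast_le (hr : 0 < r) (hz : r ≤ ‖z‖) (n : ℕ) :
    ‖z ^ (-(n : ℤ))‖ ≤ r ^ (-(n : ℤ)) := by
  rw [norm_zpow, zpow_neg, zpow_neg, zpow_natCast, zpow_natCast]
  exact inv_anti₀ (pow_pos hr n) (pow_le_pow_left₀ hr.le hz n)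

theorem norm_mul_zpow_neg_natCast_le (hr : 0 < r) (hz : r ≤ ‖z‖) (a : 𝕜) (n : ℕ) :
    ‖a * z ^ (-(n : ℤ))‖ ≤ ‖a‖ * r ^ (-(n : ℤ)) := by
  rw [norm_mul]
  exact mul_le_mul_of_nonneg_left (norm_zpow_neg_natCast_le hr hz n) (norm_nonneg a)

theorem summable_mul_zpow_neg_natCast [CompleteSpace 𝕜] {c : ℕ → 𝕜} (hr : 0 < r)
    (hc : Summable fun n : ℕ => ‖c n‖ * r ^ (-(n : ℤ))) (hz : r ≤ ‖z‖) :
    Summable fun n : ℕ => c n * z ^ (-(n : ℤ)) :=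
  hc.of_norm_bounded fun n => norm_mul_zpow_neg_natCast_le hr hz (c n) n

end LaurentTail

section Integral

variable {α : Type*} [MeasurableSpace α] {μ : Measure α}

theorem aestronglyMeasurable_of_hasSum {E : Type*} [NormedAddCommGroup E] {f : ℕ → α → E}
    {F : α → E} (hf : ∀ n, AEStronglyMeasurable (f n) μ)
    (hF : ∀ᵐ x ∂μ, HasSum (fun n => f n x) (F x)) : AEStronglyMeasurable F μ :=
  aestronglyMeasurable_of_tendsto_ae Filter.atTop
    (fun _ => Finset.aestronglyMeasurable_fun_sum _ fun n _ => hf n)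
    (hF.mono fun _ hx => hx.tendsto_sum_nat)

variable {r : ℝ} {c : ℕ → ℂ} {h : ℂ → ℂ} {z : α → ℂ}

theorem aestronglyMeasurable_comp_of_hasSum_mul_zpow_neg
    (hh : ∀ ζ : ℂ, r ≤ ‖ζ‖ → HasSum (fun n : ℕ => c n * ζ ^ (-(n : ℤ))) (h ζ))
    (hz : AEMeasurable z μ) (hzr : ∀ᵐ x ∂μ, r ≤ ‖z x‖) :
    AEStronglyMeasurable (fun x => h (z x)) μ :=
  aestronglyMeasurable_of_hasSum
    (fun _ => aestronglyMeasurable_const.mul (hz.pow_const _).aestronglyMeasurable)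
    (hzr.mono fun x hx => hh (z x) hx)

theorem hasSum_integral_mul_of_hasSum_mul_zpow_neg (hr : 0 < r)
    (hc : Summable fun n : ℕ => ‖c n‖ * r ^ (-(n : ℤ)))
    (hh : ∀ ζ : ℂ, r ≤ ‖ζ‖ → HasSum (fun n : ℕ => c n * ζ ^ (-(n : ℤ))) (h ζ))
    (hz : AEMeasurable z μ) (hzr : ∀ᵐ x ∂μ, r ≤ ‖z x‖) {g : α → ℂ}
    (hg : AEStronglyMeasurable g μ) {G : α → ℝ} (hG : Integrable G μ)
    (hgG : ∀ᵐ x ∂μ, ‖g x‖ ≤ G x) :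
    HasSum (fun n : ℕ => c n * ∫ x, z x ^ (-(n : ℤ)) * g x ∂μ) (∫ x, h (z x) * g x ∂μ) := by
  simp only [← integral_const_mul]
  refine hasSum_integral_of_dominated_convergence
    (fun n x => ‖c n‖ * r ^ (-(n : ℤ)) * G x)
    (fun n => aestronglyMeasurable_const.mul ((hz.pow_const _).aestronglyMeasurable.mul hg))
    (fun n => ?_) (Filter.Eventually.of_forall fun x => hc.mul_right (G x)) ?_ ?_
  · filter_upwards [hzr, hgG] with x hx hgx
    rw [← mul_assoc, norm_mul]
    exact mul_le_mul (norm_mul_zpow_neg_natCast_le hr hx (c n) n) hgx (norm_nonneg _)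
      (mul_nonneg (norm_nonneg _) (zpow_nonneg hr.le _))
  · simp only [tsum_mul_right]
    exact hG.const_mul _
  · filter_upwards [hzr] with x hx
    simpa only [mul_assoc] using (hh (z x) hx).mul_right (g x)

theorem integral_sq_norm_mul_zpow_eq_tsum (hr : 0 < r)
    (hc : Summable fun n : ℕ => ‖c n‖ * r ^ (-(n : ℤ)))
    (hh : ∀ ζ : ℂ, r ≤ ‖ζ‖ → HasSum (fun n : ℕ => c n * ζ ^ (-(n : ℤ))) (h ζ))
    (hz : AEMeasurable z μ) (hzr : ∀ᵐ x ∂μ, r ≤ ‖z x‖) {v : α → ℂ}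
    (hv : AEStronglyMeasurable v μ) {W : α → ℝ} (hW : Integrable W μ)
    (hvW : ∀ᵐ x ∂μ, ‖v x‖ ≤ W x) (k : ℕ) :
    ∫ x, ((‖h (z x)‖ : ℝ) : ℂ) ^ 2 * z x ^ (-(k : ℤ)) * v x ∂μ =
      ∑' n : ℕ, c n * ∫ x, conj (h (z x)) * z x ^ (-(n : ℤ) - k) * v x ∂μ := by
  set M := ∑' n : ℕ, ‖c n‖ * r ^ (-(n : ℤ))
  have hM : ∀ ζ : ℂ, r ≤ ‖ζ‖ → ‖h ζ‖ ≤ M := fun ζ hζ =>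
    (hh ζ hζ).norm_le_of_bounded hc.hasSum fun n => norm_mul_zpow_neg_natCast_le hr hζ (c n) n
  set g := fun x => conj (h (z x)) * z x ^ (-(k : ℤ)) * v x
  have hg : AEStronglyMeasurable g μ :=
    ((continuous_conj.comp_aestronglyMeasurable
      (aestronglyMeasurable_comp_of_hasSum_mul_zpow_neg hh hz hzr)).mul
      (hz.pow_const _).aestronglyMeasurable).mul hv
  have hgW : ∀ᵐ x ∂μ, ‖g x‖ ≤ M * r ^ (-(k : ℤ)) * W x := by
    filter_upwards [hzr, hvW] with x hx hvx
    simp only [g, norm_mul, RCLike.norm_conj]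
    gcongr
    · exact hM _ hx
    · exact norm_zpow_neg_natCast_le hr hx k
  have hlhs : (fun x => ((‖h (z x)‖ : ℝ) : ℂ) ^ 2 * z x ^ (-(k : ℤ)) * v x) =
      fun x => h (z x) * g x := by
    ext x
    simp only [g, ← mul_assoc, mul_conj']
  -- `zpow_add'` needs no `z x ≠ 0` because both exponents are nonpositive.
  have hrhs (n : ℕ) : (fun x => z x ^ (-(n : ℤ)) * g x) =
      fun x => conj (h (z x)) * z x ^ (-(n : ℤ) - k) * v x := by
    ext x
    rw [sub_eq_add_neg, zpow_add' (Or.inr (by omega))]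
    ring
  rw [hlhs, ← (hasSum_integral_mul_of_hasSum_mul_zpow_neg hr hc hh hz hzr hg
    (hW.const_mul _) hgW).tsum_eq]
  simp only [hrhs]

end Integral

theorem norm_ofReal_add_I_mul_ofReal (x : ℝ × ℝ) : ‖(x.1 : ℂ) + I * x.2‖ = enorm2 x := by
  rw [mul_comm, norm_add_mul_I, enorm2]

theorem measurableSet_lt_enorm2 (r : ℝ) : MeasurableSet {x : ℝ × ℝ | r < enorm2 x} :=
  measurableSet_lt measurable_const (by unfold enorm2; fun_prop)

theorem stmt10_general (r₀ T : ℝ) (hr₀ : 0 < r₀) (k : ℕ)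
    (c : ℕ → ℂ) (hc : Summable fun n : ℕ => ‖c n‖ * r₀ ^ (-(n : ℤ)))
    (h : ℂ → ℂ)
    (hh : ∀ z : ℂ, r₀ ≤ ‖z‖ → h z = ∑' n : ℕ, c n * z ^ (-(n : ℤ)))
    (w : ℝ → ℝ × ℝ → ℂ)
    (hw_meas : ∀ t ∈ Set.Icc (0 : ℝ) T, Measurable (w t))
    (W : ℝ × ℝ → ℝ)
    (hW : IntegrableOn W {x : ℝ × ℝ | r₀ < enorm2 x})
    (hw_bound : ∀ t ∈ Set.Icc (0 : ℝ) T, ∀ x : ℝ × ℝ, r₀ < enorm2 x →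
      ‖w t x‖ ≤ W x)
    (hmom : ∀ n : ℕ, ∀ t ∈ Set.Icc (0 : ℝ) T,
      (∫ x in {x : ℝ × ℝ | r₀ < enorm2 x},
        (starRingEnd ℂ) (h (x.1 + Complex.I * x.2)) *
          (x.1 + Complex.I * x.2) ^ (-(n : ℤ) - (k : ℤ)) * w t x) =
      (∫ x in {x : ℝ × ℝ | r₀ < enorm2 x},
        (starRingEnd ℂ) (h (x.1 + Complex.I * x.2)) *
          (x.1 + Complex.I * x.2) ^ (-(n : ℤ) - (k : ℤ)) * w 0 x)) :
    ∀ t ∈ Set.Icc (0 : ℝ) T,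
      (∫ x in {x : ℝ × ℝ | r₀ < enorm2 x},
        (((‖h (x.1 + Complex.I * x.2)‖ : ℝ) : ℂ)) ^ 2 *
          (x.1 + Complex.I * x.2) ^ (-(k : ℤ)) * w t x) =
      (∫ x in {x : ℝ × ℝ | r₀ < enorm2 x},
        (((‖h (x.1 + Complex.I * x.2)‖ : ℝ) : ℂ)) ^ 2 *
          (x.1 + Complex.I * x.2) ^ (-(k : ℤ)) * w 0 x) := by
  intro t ht
  have hS := measurableSet_lt_enorm2 r₀
  have hh' (ζ : ℂ) (hζ : r₀ ≤ ‖ζ‖) : HasSum (fun n : ℕ => c n * ζ ^ (-(n : ℤ))) (h ζ) :=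
    hh ζ hζ ▸ (summable_mul_zpow_neg_natCast hr₀ hc hζ).hasSum
  have key (s : ℝ) (hs : s ∈ Icc 0 T) := integral_sq_norm_mul_zpow_eq_tsum hr₀ hc hh'
    (z := fun x : ℝ × ℝ => (x.1 : ℂ) + I * x.2) (by fun_prop)
    (ae_restrict_of_forall_mem hS fun x hx => (norm_ofReal_add_I_mul_ofReal x).symm ▸ hx.le)
    (hw_meas s hs).aestronglyMeasurable hW (ae_restrict_of_forall_mem hS (hw_bound s hs)) k
  rw [key t ht, key 0 ⟨le_rfl, ht.1.trans ht.2⟩]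
  exact tsum_congr fun n => by rw [hmom n t ht]

/-- series-interchange step for general exterior domains. If
`h(z) = Σ_{n≥0} c_n z^{-n}` with `Σ |c_n| r₀^{-n} < ∞`, `w(t,·)` is measurable and
dominated by an integrable `W` on `{|x| > r₀}`, and every moment
`t ↦ ∫ conj(h(z)) z^{-(n+k)} w(t,x) dx` is constant on `[0,T]`, then
`t ↦ ∫ |h(z)|² z^{-k} w(t,x) dx` is constant on `[0,T]`. -/
theorem stmt10 (r₀ T : ℝ) (hr₀ : 0 < r₀) (hT : 0 < T) (k : ℕ)
    (c : ℕ → ℂ) (hc : Summable fun n : ℕ => ‖c n‖ * r₀ ^ (-(n : ℤ)))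
    (h : ℂ → ℂ)
    (hh : ∀ z : ℂ, r₀ ≤ ‖z‖ → h z = ∑' n : ℕ, c n * z ^ (-(n : ℤ)))
    (w : ℝ → ℝ × ℝ → ℂ)
    (hw_meas : ∀ t ∈ Set.Icc (0 : ℝ) T, Measurable (w t))
    (W : ℝ × ℝ → ℝ)
    (hW : IntegrableOn W {x : ℝ × ℝ | r₀ < enorm2 x})
    (hw_bound : ∀ t ∈ Set.Icc (0 : ℝ) T, ∀ x : ℝ × ℝ, r₀ < enorm2 x →
      ‖w t x‖ ≤ W x)
    (hmom : ∀ n : ℕ, ∀ t ∈ Set.Icc (0 : ℝ) T,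
      (∫ x in {x : ℝ × ℝ | r₀ < enorm2 x},
        (starRingEnd ℂ) (h (x.1 + Complex.I * x.2)) *
          (x.1 + Complex.I * x.2) ^ (-(n : ℤ) - (k : ℤ)) * w t x) =
      (∫ x in {x : ℝ × ℝ | r₀ < enorm2 x},
        (starRingEnd ℂ) (h (x.1 + Complex.I * x.2)) *
          (x.1 + Complex.I * x.2) ^ (-(n : ℤ) - (k : ℤ)) * w 0 x)) :
    ∀ t ∈ Set.Icc (0 : ℝ) T,
      (∫ x in {x : ℝ × ℝ | r₀ < enorm2 x},
        (((‖h (x.1 + Complex.I * x.2)‖ : ℝ) : ℂ)) ^ 2 *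
          (x.1 + Complex.I * x.2) ^ (-(k : ℤ)) * w t x) =
      (∫ x in {x : ℝ × ℝ | r₀ < enorm2 x},
        (((‖h (x.1 + Complex.I * x.2)‖ : ℝ) : ℂ)) ^ 2 *
          (x.1 + Complex.I * x.2) ^ (-(k : ℤ)) * w 0 x) :=
  stmt10_general r₀ T hr₀ k c hc h hh w hw_meas W hW hw_bound hmom
end

section
/- Let r₀ > 0, k ∈ ℕ, and let w : [r₀,∞) → ℂ be twice continuously differentiable. Define Δ_k w(s) = (1/s) d/ds ( s w'(s) ) − (k²/s²) w(s). Assume the functions s ↦ s^{-k+1} Δ_k w(s), s ↦ s^{-k} w'(s) and s ↦ s^{-k-1} w(s) are integrable on (r₀,∞), and that s^{-k+1} w'(s) → 0 and s^{-k} w(s) → 0 as s → ∞. Then ∫_{r₀}^∞ s^{-k+1} Δ_k w(s) ds = − r₀^{-k} ( r₀ w'(r₀) + k w(r₀) ). -/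
open MeasureTheory Set Complex Filter

/-!
The weighted integrand `s^{-k+1} Δ_k w` is an exact derivative: it is the derivative of the flux
`F(s) = s^{-k} (s w'(s) + k w(s))`, the cross terms `∓ k s^{-k} w'` cancelling. Since `F → 0` at
infinity, the fundamental theorem of calculus on `(r₀, ∞)` gives the value `-F(r₀)`.
-/

theorem integral_Ioi_of_hasDerivWithinAt_Ici_of_tendsto {E : Type*} [NormedAddCommGroup E]
    [NormedSpace ℝ E] [CompleteSpace E] {f f' : ℝ → E} {a : ℝ} {m : E}
    (hderiv : ∀ x ∈ Ici a, HasDerivWithinAt f (f' x) (Ici a) x)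
    (f'int : IntegrableOn f' (Ioi a)) (hf : Tendsto f atTop (nhds m)) :
    ∫ x in Ioi a, f' x = m - f a :=
  integral_Ioi_of_hasDerivAt_of_tendsto (hderiv a self_mem_Ici).continuousWithinAt
    (fun _ hx => (hderiv _ (Ioi_subset_Ici_self hx)).hasDerivAt (Ici_mem_nhds hx)) f'int hf

theorem hasDerivWithinAt_zpow_mul_flux {t : Set ℝ} {s : ℝ} (hs : s ≠ 0) (k : ℤ)
    {w w' : ℝ → ℂ} {d : ℂ} (hw : HasDerivWithinAt w (w' s) t s)
    (hg : HasDerivWithinAt (fun σ : ℝ => (σ : ℂ) * w' σ) d t s) :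
    HasDerivWithinAt (fun σ : ℝ => (σ : ℂ) ^ (-k) * ((σ : ℂ) * w' σ + k * w σ))
      ((s : ℂ) ^ (-k + 1) * (1 / (s : ℂ) * d - ((k : ℂ) ^ 2 / (s : ℂ) ^ 2) * w s)) t s := by
  have hs' : (s : ℂ) ≠ 0 := ofReal_ne_zero.mpr hs
  have hpow : HasDerivWithinAt (fun σ : ℝ => (σ : ℂ) ^ (-k))
      ((-k : ℤ) * (s : ℂ) ^ (-k - 1)) t s :=
    ((hasDerivAt_zpow (-k) (s : ℂ) (Or.inl hs')).comp_ofReal).hasDerivWithinAt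
  refine (hpow.mul (hg.add (hw.const_mul (k : ℂ)))).congr_deriv ?_
  rw [Pi.add_apply, zpow_sub_one₀ hs', zpow_add_one₀ hs']
  field_simp
  push_cast
  ring

theorem tendsto_zpow_mul_flux {k : ℤ} {w w' : ℝ → ℂ}
    (hw' : Tendsto (fun s : ℝ => (s : ℂ) ^ (-k + 1) * w' s) atTop (nhds 0))
    (hw : Tendsto (fun s : ℝ => (s : ℂ) ^ (-k) * w s) atTop (nhds 0)) :
    Tendsto (fun s : ℝ => (s : ℂ) ^ (-k) * ((s : ℂ) * w' s + k * w s)) atTop (nhds 0) := by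
  have hsum := hw'.add (hw.const_mul (k : ℂ))
  rw [mul_zero, add_zero] at hsum
  refine hsum.congr' ?_
  filter_upwards [eventually_ne_atTop (0 : ℝ)] with s hs
  rw [zpow_add_one₀ (ofReal_ne_zero.mpr hs)]
  ring

theorem stmt12_general (r₀ : ℝ) (hr₀ : 0 < r₀) (k : ℕ) (w w' : ℝ → ℂ)
    (hw' : ∀ s ∈ Set.Ici r₀, HasDerivWithinAt w (w' s) (Set.Ici r₀) s)
    (hw'smooth : ContDiffOn ℝ 1 w' (Set.Ici r₀))
    (Δkw : ℝ → ℂ)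
    (hΔ : ∀ s ∈ Set.Ici r₀, Δkw s =
      (1 / (s : ℂ)) * derivWithin (fun σ : ℝ => (σ : ℂ) * w' σ) (Set.Ici r₀) s
        - ((k : ℂ) ^ 2 / (s : ℂ) ^ 2) * w s)
    (hint1 : IntegrableOn (fun s : ℝ => (s : ℂ) ^ (-(k : ℤ) + 1) * Δkw s) (Set.Ioi r₀))
    (hlim1 : Tendsto (fun s : ℝ => (s : ℂ) ^ (-(k : ℤ) + 1) * w' s) atTop (nhds 0))
    (hlim2 : Tendsto (fun s : ℝ => (s : ℂ) ^ (-(k : ℤ)) * w s) atTop (nhds 0)) :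
    (∫ s in Set.Ioi r₀, (s : ℂ) ^ (-(k : ℤ) + 1) * Δkw s) =
      -(r₀ : ℂ) ^ (-(k : ℤ)) * ((r₀ : ℂ) * w' r₀ + (k : ℂ) * w r₀) := by
  have hflux : ∀ s ∈ Ici r₀, HasDerivWithinAt
      (fun σ : ℝ => (σ : ℂ) ^ (-(k : ℤ)) * ((σ : ℂ) * w' σ + ((k : ℤ) : ℂ) * w σ))
      ((s : ℂ) ^ (-(k : ℤ) + 1) * Δkw s) (Ici r₀) s := by
    intro s hs
    have hg : DifferentiableWithinAt ℝ (fun σ : ℝ => (σ : ℂ) * w' σ) (Ici r₀) s :=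
      ofRealCLM.differentiableWithinAt.mul (hw'smooth.differentiableOn one_ne_zero s hs)
    rw [hΔ s hs, ← Int.cast_natCast]
    exact hasDerivWithinAt_zpow_mul_flux (hr₀.trans_le hs).ne' k (hw' s hs) hg.hasDerivWithinAt
  rw [integral_Ioi_of_hasDerivWithinAt_Ici_of_tendsto hflux hint1
    (tendsto_zpow_mul_flux hlim1 hlim2)]
  push_cast
  ring

/-- integration by parts against the mode-`k` Laplacian. For a twice
continuously differentiable `w` on `[r₀,∞)` with integrable weighted derivatives and the
stated decay at infinity,
`∫_{r₀}^∞ s^{-k+1} Δ_k w(s) ds = − r₀^{-k} ( r₀ w'(r₀) + k w(r₀) )`,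
where `Δ_k w(s) = (1/s)(s w'(s))' − (k²/s²) w(s)`. -/
theorem stmt12 (r₀ : ℝ) (hr₀ : 0 < r₀) (k : ℕ) (w w' : ℝ → ℂ)
    (hw' : ∀ s ∈ Set.Ici r₀, HasDerivWithinAt w (w' s) (Set.Ici r₀) s)
    (hw'smooth : ContDiffOn ℝ 1 w' (Set.Ici r₀))
    (Δkw : ℝ → ℂ)
    (hΔ : ∀ s ∈ Set.Ici r₀, Δkw s =
      (1 / (s : ℂ)) * derivWithin (fun σ : ℝ => (σ : ℂ) * w' σ) (Set.Ici r₀) s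
        - ((k : ℂ) ^ 2 / (s : ℂ) ^ 2) * w s)
    (hint1 : IntegrableOn (fun s : ℝ => (s : ℂ) ^ (-(k : ℤ) + 1) * Δkw s) (Set.Ioi r₀))
    (hint2 : IntegrableOn (fun s : ℝ => (s : ℂ) ^ (-(k : ℤ)) * w' s) (Set.Ioi r₀))
    (hint3 : IntegrableOn (fun s : ℝ => (s : ℂ) ^ (-(k : ℤ) - 1) * w s) (Set.Ioi r₀))
    (hlim1 : Tendsto (fun s : ℝ => (s : ℂ) ^ (-(k : ℤ) + 1) * w' s) atTop (nhds 0))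
    (hlim2 : Tendsto (fun s : ℝ => (s : ℂ) ^ (-(k : ℤ)) * w s) atTop (nhds 0)) :
    (∫ s in Set.Ioi r₀, (s : ℂ) ^ (-(k : ℤ) + 1) * Δkw s) =
      -(r₀ : ℂ) ^ (-(k : ℤ)) * ((r₀ : ℂ) * w' r₀ + (k : ℂ) * w r₀) :=
  stmt12_general r₀ hr₀ k w w' hw' hw'smooth Δkw hΔ hint1 hlim1 hlim2
end

section
/- Let 0 < r₁ < r₂, let w : {x ∈ ℝ² : r₁ < |x| < r₂} → ℂ be continuously differentiable, let v∞ = (v∞x, v∞y) ∈ ℝ², and set a = ½(v∞x − i v∞y), b = ½(v∞x + i v∞y). For m ∈ ℤ and r ∈ (r₁,r₂) let w_m(r) = (1/(2π)) ∫₀^{2π} w(r cos φ, r sin φ) e^{-imφ} dφ. Then for every k ∈ ℤ and r ∈ (r₁,r₂), the k-th angular Fourier coefficient of the function x ↦ v∞x ∂₁w(x) + v∞y ∂₂w(x) at radius r equals a w_{k-1}'(r) + b w_{k+1}'(r) − ((k−1)a/r) w_{k-1}(r) + ((k+1)b/r) w_{k+1}(r). -/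
/-!
In polar coordinates `x = (r cos φ, r sin φ)` the derivative along `v∞` splits into a radial part
`(vx cos φ + vy sin φ) ∂_r w` and an angular part `(vy cos φ - vx sin φ) r⁻¹ ∂_φ w`, whose
coefficients are `a e^{iφ} + b e^{-iφ}` and `i (a e^{iφ} - b e^{-iφ})`. The `k`-th angular
coefficient of `e^{±iφ} f` is the `(k ∓ 1)`-th coefficient of `f`. Finally the `m`-th coefficient
of `∂_r w` is `w_m'(r)` (differentiation under the integral sign, dominated by a bound for `Dw` on
a compact annulus) and that of `∂_φ w` is `i m w_m(r)` (integration by parts over a period).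
-/

open MeasureTheory Set Complex Real

/-- The `k`-th angular Fourier coefficient of a function `u` on the plane, at radius `s`. -/
noncomputable def angCoeff (u : ℝ × ℝ → ℂ) (k : ℤ) (s : ℝ) : ℂ :=
  (1 / (2 * Real.pi)) *
    ∫ φ in (0 : ℝ)..(2 * Real.pi),
      u (s * Real.cos φ, s * Real.sin φ) * Complex.exp (-Complex.I * k * φ)

noncomputable def fromPolar (ρ φ : ℝ) : ℝ × ℝ := (ρ * Real.cos φ, ρ * Real.sin φ)

lemma enorm2_fromPolar {ρ : ℝ} (hρ : 0 ≤ ρ) (φ : ℝ) : enorm2 (fromPolar ρ φ) = ρ := by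
  have h : (ρ * Real.cos φ) ^ 2 + (ρ * Real.sin φ) ^ 2 = ρ ^ 2 := by
    linear_combination ρ ^ 2 * Real.sin_sq_add_cos_sq φ
  rw [enorm2, fromPolar, h, sqrt_sq hρ]

lemma isOpen_annulus (r₁ r₂ : ℝ) : IsOpen {x : ℝ × ℝ | r₁ < enorm2 x ∧ enorm2 x < r₂} :=
  isOpen_Ioo.preimage (by unfold enorm2; fun_prop)

lemma fromPolar_mem_annulus {r₁ r₂ ρ : ℝ} (hr₁ : 0 ≤ r₁) (hρ : ρ ∈ Ioo r₁ r₂) (φ : ℝ) :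
    fromPolar ρ φ ∈ {x : ℝ × ℝ | r₁ < enorm2 x ∧ enorm2 x < r₂} := by
  rw [mem_ofPred_eq, enorm2_fromPolar (hr₁.trans hρ.1.le)]
  exact hρ

@[fun_prop]
lemma continuous_fromPolar : Continuous (Function.uncurry fromPolar) := by
  unfold fromPolar; fun_prop

lemma hasDerivAt_fromPolar_radius (ρ φ : ℝ) :
    HasDerivAt (fromPolar · φ) (Real.cos φ, Real.sin φ) ρ :=
  (hasDerivAt_mul_const (Real.cos φ)).prodMk (hasDerivAt_mul_const (Real.sin φ))

lemma hasDerivAt_fromPolar_angle (ρ φ : ℝ) :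
    HasDerivAt (fromPolar ρ) (-(ρ * Real.sin φ), ρ * Real.cos φ) φ := by
  refine HasDerivAt.prodMk ?_ ((Real.hasDerivAt_sin φ).const_mul ρ)
  simpa using (Real.hasDerivAt_cos φ).const_mul ρ

noncomputable def circleCoeff (g : ℝ → ℂ) (m : ℤ) : ℂ :=
  (1 / (2 * π)) * ∫ φ in (0 : ℝ)..(2 * π), g φ * cexp (-I * m * φ)

lemma angCoeff_eq_circleCoeff (u : ℝ × ℝ → ℂ) (m : ℤ) (s : ℝ) :
    angCoeff u m s = circleCoeff (fun φ => u (fromPolar s φ)) m := rfl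

section circleCoeff

variable {f g : ℝ → ℂ} {m : ℤ}

lemma intervalIntegrable_mul_cexp (hf : Continuous f) (m : ℤ) :
    IntervalIntegrable (fun φ : ℝ => f φ * cexp (-I * m * φ)) volume 0 (2 * π) :=
  (hf.mul (by fun_prop)).intervalIntegrable _ _

lemma circleCoeff_add (hf : Continuous f) (hg : Continuous g) :
    circleCoeff (fun φ => f φ + g φ) m = circleCoeff f m + circleCoeff g m := by
  simp only [circleCoeff, add_mul]
  rw [intervalIntegral.integral_add (intervalIntegrable_mul_cexp hf m)
    (intervalIntegrable_mul_cexp hg m), mul_add]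

lemma circleCoeff_sub (hf : Continuous f) (hg : Continuous g) :
    circleCoeff (fun φ => f φ - g φ) m = circleCoeff f m - circleCoeff g m := by
  simp only [circleCoeff, sub_mul]
  rw [intervalIntegral.integral_sub (intervalIntegrable_mul_cexp hf m)
    (intervalIntegrable_mul_cexp hg m), mul_sub]

lemma circleCoeff_const_mul (c : ℂ) :
    circleCoeff (fun φ => c * f φ) m = c * circleCoeff f m := by
  simp only [circleCoeff, mul_assoc, intervalIntegral.integral_const_mul]
  ring

lemma circleCoeff_cexp_mul_I :
    circleCoeff (fun φ => cexp (φ * I) * f φ) m = circleCoeff f (m - 1) := by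
  unfold circleCoeff
  congr 2 with φ
  dsimp only
  rw [mul_comm (cexp _), mul_assoc, ← Complex.exp_add]
  push_cast; ring_nf

lemma circleCoeff_cexp_neg_mul_I :
    circleCoeff (fun φ => cexp (-φ * I) * f φ) m = circleCoeff f (m + 1) := by
  unfold circleCoeff
  congr 2 with φ
  dsimp only
  rw [mul_comm (cexp _), mul_assoc, ← Complex.exp_add]
  push_cast; ring_nf

lemma circleCoeff_deriv {g' : ℝ → ℂ} (hg : ∀ φ ∈ uIcc 0 (2 * π), HasDerivAt g (g' φ) φ)
    (hg' : IntervalIntegrable g' volume 0 (2 * π)) (hper : g (2 * π) = g 0) :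
    circleCoeff g' m = I * m * circleCoeff g m := by
  set e : ℝ → ℂ := fun φ => cexp (-I * m * φ)
  have he : ∀ φ : ℝ, HasDerivAt e (-I * m * e φ) φ := fun φ => by
    simpa [e, mul_comm] using (((hasDerivAt_id (φ : ℂ)).const_mul (-I * m)).cexp).comp_ofReal
  have he_period : e (2 * π) = e 0 := by
    simp only [e, ofReal_zero, mul_zero, Complex.exp_zero]
    rw [show -I * m * ↑(2 * π) = (-m : ℤ) * (2 * π * I) by push_cast; ring,
      Complex.exp_int_mul_two_pi_mul_I]
  have hgc : ContinuousOn g (uIcc 0 (2 * π)) := fun φ hφ =>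
    (hg φ hφ).continuousAt.continuousWithinAt
  have hparts := intervalIntegral.integral_deriv_mul_eq_sub hg (fun φ _ => he φ) hg'
    ((continuous_const.mul (by fun_prop)).intervalIntegrable _ _)
  have hsplit : ∫ φ in (0 : ℝ)..(2 * π), g φ * (-I * m * e φ)
      = -I * m * ∫ φ in (0 : ℝ)..(2 * π), g φ * e φ := by
    rw [← intervalIntegral.integral_const_mul]
    congr 1 with φ
    ring
  have hint₁ : IntervalIntegrable (fun φ => g' φ * e φ) volume 0 (2 * π) :=
    hg'.mul_continuousOn (by fun_prop)
  have hint₂ : IntervalIntegrable (fun φ => g φ * (-I * m * e φ)) volume 0 (2 * π) :=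
    (hgc.mul (by fun_prop)).intervalIntegrable
  rw [hper, he_period, sub_self, intervalIntegral.integral_add hint₁ hint₂, hsplit] at hparts
  change (1 / (2 * π)) * ∫ φ in (0 : ℝ)..(2 * π), g' φ * e φ
    = I * m * ((1 / (2 * π)) * ∫ φ in (0 : ℝ)..(2 * π), g φ * e φ)
  linear_combination (1 / (2 * π) : ℂ) * hparts

end circleCoeff

theorem hasDerivAt_intervalIntegral_of_continuousOn {E : Type*} [NormedAddCommGroup E]
    [NormedSpace ℝ E] {F F' : ℝ → ℝ → E} {x₀ ε a b : ℝ} (hε : 0 < ε)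
    (hF : ∀ x ∈ Metric.ball x₀ ε, ContinuousOn (F x) (uIcc a b))
    (hF' : ContinuousOn (Function.uncurry F') (Metric.closedBall x₀ ε ×ˢ uIcc a b))
    (hderiv : ∀ x ∈ Metric.ball x₀ ε, ∀ t ∈ uIcc a b, HasDerivAt (F · t) (F' x t) x) :
    HasDerivAt (fun x => ∫ t in a..b, F x t) (∫ t in a..b, F' x₀ t) x₀ := by
  obtain ⟨C, hC⟩ :=
    ((isCompact_closedBall x₀ ε).prod isCompact_uIcc).exists_bound_of_continuousOn hF'
  have hx₀ : x₀ ∈ Metric.ball x₀ ε := Metric.mem_ball_self hε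
  have hF'x₀ : ContinuousOn (F' x₀) (uIcc a b) :=
    hF'.comp (continuousOn_const.prodMk continuousOn_id)
      fun t ht => ⟨Metric.ball_subset_closedBall hx₀, ht⟩
  refine (intervalIntegral.hasDerivAt_integral_of_dominated_loc_of_deriv_le
    (bound := fun _ => C) (Metric.ball_mem_nhds x₀ hε) ?_
    (hF x₀ hx₀).intervalIntegrable
    ((hF'x₀.mono uIoc_subset_uIcc).aestronglyMeasurable measurableSet_uIoc) ?_
    intervalIntegrable_const ?_).2
  · filter_upwards [Metric.ball_mem_nhds x₀ hε] with x hx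
    exact ((hF x hx).mono uIoc_subset_uIcc).aestronglyMeasurable measurableSet_uIoc
  · exact ae_of_all _ fun t ht x hx =>
      hC (x, t) ⟨Metric.ball_subset_closedBall hx, uIoc_subset_uIcc ht⟩
  · exact ae_of_all _ fun t ht x hx => hderiv x hx t (uIoc_subset_uIcc ht)

section fromPolar

variable {w : ℝ × ℝ → ℂ} {U : Set (ℝ × ℝ)}

lemma continuous_fderiv_fromPolar (hU : IsOpen U) (hw : ContDiffOn ℝ 1 w U) {r : ℝ}
    (hrU : ∀ φ, fromPolar r φ ∈ U) : Continuous fun φ => fderiv ℝ w (fromPolar r φ) :=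
  (hw.continuousOn_fderiv_of_isOpen hU le_rfl).comp_continuous (by fun_prop) hrU

lemma hasFDerivAt_of_contDiffOn (hU : IsOpen U) (hw : ContDiffOn ℝ 1 w U) {p : ℝ × ℝ}
    (hp : p ∈ U) : HasFDerivAt w (fderiv ℝ w p) p :=
  ((hw.differentiableOn one_ne_zero).differentiableAt (hU.mem_nhds hp)).hasFDerivAt

lemma hasDerivAt_angCoeff (hU : IsOpen U) (hw : ContDiffOn ℝ 1 w U) {r ε : ℝ} (hε : 0 < ε)
    (hrU : ∀ ρ ∈ Metric.closedBall r ε, ∀ φ, fromPolar ρ φ ∈ U) (m : ℤ) :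
    HasDerivAt (fun ρ => angCoeff w m ρ)
      (circleCoeff (fun φ => fderiv ℝ w (fromPolar r φ) (Real.cos φ, Real.sin φ)) m) r := by
  have hdw : ContinuousOn (fderiv ℝ w) U := hw.continuousOn_fderiv_of_isOpen hU le_rfl
  refine .const_mul _ (hasDerivAt_intervalIntegral_of_continuousOn
    (F := fun ρ φ => w (fromPolar ρ φ) * cexp (-I * m * φ))
    (F' := fun ρ φ => fderiv ℝ w (fromPolar ρ φ) (Real.cos φ, Real.sin φ) * cexp (-I * m * φ))
    hε ?_ ?_ ?_)
  · intro ρ hρ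
    exact ((hw.continuousOn.comp_continuous (by fun_prop)
      (hrU ρ (Metric.ball_subset_closedBall hρ))).mul (by fun_prop)).continuousOn
  · have : ContinuousOn (fun p : ℝ × ℝ => fderiv ℝ w (fromPolar p.1 p.2))
        (Metric.closedBall r ε ×ˢ uIcc 0 (2 * π)) :=
      hdw.comp continuous_fromPolar.continuousOn fun p hp => hrU p.1 hp.1 p.2
    exact (this.clm_apply (by fun_prop)).mul (by fun_prop)
  · intro ρ hρ φ _
    have hwρ := hasFDerivAt_of_contDiffOn hU hw (hrU ρ (Metric.ball_subset_closedBall hρ) φ)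
    exact (hwρ.comp_hasDerivAt ρ (hasDerivAt_fromPolar_radius ρ φ)).mul_const _

lemma circleCoeff_fderiv_fromPolar_angle (hU : IsOpen U) (hw : ContDiffOn ℝ 1 w U) {r : ℝ}
    (hrU : ∀ φ, fromPolar r φ ∈ U) (m : ℤ) :
    circleCoeff (fun φ => fderiv ℝ w (fromPolar r φ) (-(r * Real.sin φ), r * Real.cos φ)) m
      = I * m * angCoeff w m r := by
  rw [angCoeff_eq_circleCoeff]
  refine circleCoeff_deriv (fun φ _ => ?_)
    (((continuous_fderiv_fromPolar hU hw hrU).clm_apply (by fun_prop)).intervalIntegrable _ _) ?_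
  · exact (hasFDerivAt_of_contDiffOn hU hw (hrU φ)).comp_hasDerivAt φ
      (hasDerivAt_fromPolar_angle r φ)
  · simp [fromPolar]

end fromPolar

lemma clm_apply_prod (L : ℝ × ℝ →L[ℝ] ℂ) (u v : ℝ) : L (u, v) = u * L (1, 0) + v * L (0, 1) := by
  rw [← Complex.real_smul, ← Complex.real_smul, ← L.map_smul, ← L.map_smul, ← L.map_add]
  simp

lemma directional_eq_radial_add_angular (L : ℝ × ℝ →L[ℝ] ℂ) {vx vy : ℝ} {a b : ℂ}
    (ha : a = ((vx : ℂ) - I * vy) / 2) (hb : b = ((vx : ℂ) + I * vy) / 2)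
    {r : ℝ} (hr : r ≠ 0) (φ : ℝ) :
    vx * L (1, 0) + vy * L (0, 1) =
      a * (cexp (φ * I) * L (Real.cos φ, Real.sin φ))
      + b * (cexp (-φ * I) * L (Real.cos φ, Real.sin φ))
      + I * a / r * (cexp (φ * I) * L (-(r * Real.sin φ), r * Real.cos φ))
      - I * b / r * (cexp (-φ * I) * L (-(r * Real.sin φ), r * Real.cos φ)) := by
  have hcs := Complex.cos_sq_add_sin_sq (φ : ℂ)
  have hr' : (r : ℂ) ≠ 0 := by exact_mod_cast hr
  rw [clm_apply_prod L (Real.cos φ), clm_apply_prod L (-(r * Real.sin φ))]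
  simp only [Complex.exp_mul_I, Complex.cos_neg, Complex.sin_neg,
    ← Complex.ofReal_cos, ← Complex.ofReal_sin, ha, hb]
  push_cast
  field_simp
  set c := Complex.cos φ
  set s := Complex.sin φ
  set X := L (1, 0)
  set Y := L (0, 1)
  linear_combination (-2 * (vx * X + vy * Y)) * hcs
    - 2 * (-vy * s * (c * X + s * Y) + (vx * s - vy * c) * (-s * X + c * Y)) * I_sq

theorem stmt17_general (r₁ r₂ : ℝ) (hr₁ : 0 < r₁)
    (w : ℝ × ℝ → ℂ)
    (hw : ContDiffOn ℝ 1 w {x : ℝ × ℝ | r₁ < enorm2 x ∧ enorm2 x < r₂})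
    (vx vy : ℝ) (a b : ℂ)
    (ha : a = ((vx : ℂ) - Complex.I * vy) / 2)
    (hb : b = ((vx : ℂ) + Complex.I * vy) / 2) :
    ∀ k : ℤ, ∀ r ∈ Set.Ioo r₁ r₂,
      angCoeff (fun x : ℝ × ℝ =>
          (vx : ℂ) * fderiv ℝ w x (1, 0) + (vy : ℂ) * fderiv ℝ w x (0, 1)) k r =
        a * deriv (fun ρ => angCoeff w (k - 1) ρ) r
        + b * deriv (fun ρ => angCoeff w (k + 1) ρ) r
        - (((k : ℂ) - 1) * a / (r : ℂ)) * angCoeff w (k - 1) r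
        + (((k : ℂ) + 1) * b / (r : ℂ)) * angCoeff w (k + 1) r := by
  intro k r hr
  have hU := isOpen_annulus r₁ r₂
  have hrU := fromPolar_mem_annulus hr₁.le hr
  obtain ⟨ε, hε, hball⟩ := Metric.nhds_basis_closedBall.mem_iff.1 (isOpen_Ioo.mem_nhds hr)
  have hderiv (m : ℤ) := (hasDerivAt_angCoeff hU hw hε
    (fun ρ hρ => fromPolar_mem_annulus hr₁.le (hball hρ)) m).deriv
  have hangle := circleCoeff_fderiv_fromPolar_angle hU hw hrU
  set Dr := fun φ => fderiv ℝ w (fromPolar r φ) (Real.cos φ, Real.sin φ)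
  set Dθ := fun φ => fderiv ℝ w (fromPolar r φ) (-(r * Real.sin φ), r * Real.cos φ)
  have hDr : Continuous Dr := (continuous_fderiv_fromPolar hU hw hrU).clm_apply (by fun_prop)
  have hDθ : Continuous Dθ := (continuous_fderiv_fromPolar hU hw hrU).clm_apply (by fun_prop)
  calc _ = circleCoeff (fun φ => a * (cexp (φ * I) * Dr φ) + b * (cexp (-φ * I) * Dr φ)
          + I * a / r * (cexp (φ * I) * Dθ φ) - I * b / r * (cexp (-φ * I) * Dθ φ)) k := by
        rw [angCoeff_eq_circleCoeff]
        congr 1 with φ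
        exact directional_eq_radial_add_angular _ ha hb (hr₁.trans hr.1).ne' φ
    _ = a * circleCoeff Dr (k - 1) + b * circleCoeff Dr (k + 1)
          + I * a / r * circleCoeff Dθ (k - 1) - I * b / r * circleCoeff Dθ (k + 1) := by
        rw [circleCoeff_sub (by fun_prop) (by fun_prop),
          circleCoeff_add (by fun_prop) (by fun_prop), circleCoeff_add (by fun_prop) (by fun_prop)]
        simp only [circleCoeff_const_mul, circleCoeff_cexp_mul_I, circleCoeff_cexp_neg_mul_I]
    _ = _ := by
        rw [hderiv, hderiv, hangle, hangle]
        push_cast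
        linear_combination (((k : ℂ) - 1) * a / r * angCoeff w (k - 1) r
          - ((k : ℂ) + 1) * b / r * angCoeff w (k + 1) r) * I_sq

/-- Fourier coefficients of the Oseen convection term. For `w`
continuously differentiable on the annulus `r₁ < |x| < r₂`,
`a = ½(v∞x − i v∞y)`, `b = ½(v∞x + i v∞y)`, the `k`-th angular Fourier coefficient of
`x ↦ v∞x ∂₁w(x) + v∞y ∂₂w(x)` at radius `r` equals
`a w_{k-1}'(r) + b w_{k+1}'(r) − ((k−1)a/r) w_{k-1}(r) + ((k+1)b/r) w_{k+1}(r)`. -/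
theorem stmt17 (r₁ r₂ : ℝ) (hr₁ : 0 < r₁) (hr₁₂ : r₁ < r₂)
    (w : ℝ × ℝ → ℂ)
    (hw : ContDiffOn ℝ 1 w {x : ℝ × ℝ | r₁ < enorm2 x ∧ enorm2 x < r₂})
    (vx vy : ℝ) (a b : ℂ)
    (ha : a = ((vx : ℂ) - Complex.I * vy) / 2)
    (hb : b = ((vx : ℂ) + Complex.I * vy) / 2) :
    ∀ k : ℤ, ∀ r ∈ Set.Ioo r₁ r₂,
      angCoeff (fun x : ℝ × ℝ =>
          (vx : ℂ) * fderiv ℝ w x (1, 0) + (vy : ℂ) * fderiv ℝ w x (0, 1)) k r =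
        a * deriv (fun ρ => angCoeff w (k - 1) ρ) r
        + b * deriv (fun ρ => angCoeff w (k + 1) ρ) r
        - (((k : ℂ) - 1) * a / (r : ℂ)) * angCoeff w (k - 1) r
        + (((k : ℂ) + 1) * b / (r : ℂ)) * angCoeff w (k + 1) r :=
  stmt17_general r₁ r₂ hr₁ w hw vx vy a b ha hb
end
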